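/- arXiv:2501.10203 — 7 statements merged into one kernel-verified Lean document; each statement's English description precedes it below -/
import Mathlib

section
/- Let H be an oriented graph with no isolated edges, let s be a vertex of H with exactly ℓ ≥ 1 in-neighbours and out-degree 0, and let H' be the graph obtained by deleting s from H. Then κ(H') ≤ κ(H) − ℓ, where κ(H) = 2|E(H)| − d₁(H) and d₁ counts vertices of degree 1. -/
open Classical in
noncomputable def edgeCount {V : Type*} [Fintype V] (E : V → V → Prop) : ℕ :=
  (Finset.univ.filter fun p : V × V => E p.1 p.2).card

open Classical in
noncomputable def degE {V : Type*} [Fintype V] (E : V → V → Prop) (v : V) : ℕ :=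
  (Finset.univ.filter fun u : V => E u v ∨ E v u).card

open Classical in
noncomputable def kappa {V : Type*} [Fintype V] (E : V → V → Prop) : ℕ :=
  2 * edgeCount E - (Finset.univ.filter fun v : V => degE E v = 1).card

open Classical in
lemma sum_degE_eq {V : Type*} [Fintype V] (E : V → V → Prop)
    (hasym : ∀ u v, E u v → ¬ E v u) :
    ∑ v, degE E v = 2 * edgeCount E := by
  classical
  unfold degE edgeCount
  simp only [Finset.card_filter]
  rw [Fintype.sum_prod_type]
  have h1 : ∀ v u, (if E u v ∨ E v u then (1:ℕ) else 0)
      = (if E u v then 1 else 0) + (if E v u then 1 else 0) := by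
    intro v u
    by_cases h : E u v
    · simp [h, hasym u v h]
    · by_cases h2 : E v u <;> simp [h, h2]
  simp_rw [h1, Finset.sum_add_distrib]
  rw [Finset.sum_comm (f := fun v u => if E v u then (1:ℕ) else 0)]
  rw [Finset.sum_comm (f := fun v u => if E u v then (1:ℕ) else 0)]
  ring

open Classical in
lemma d1_le_sum {V : Type*} [Fintype V] (E : V → V → Prop) :
    (Finset.univ.filter fun v : V => degE E v = 1).card ≤ ∑ v, degE E v := by
  classical
  rw [Finset.card_eq_sum_ones]
  calc ∑ _v ∈ (Finset.univ.filter fun v : V => degE E v = 1), 1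
      = ∑ v ∈ (Finset.univ.filter fun v : V => degE E v = 1), degE E v := by
        apply Finset.sum_congr rfl
        intro v hv
        simp only [Finset.mem_filter] at hv
        omega
    _ ≤ ∑ v, degE E v := Finset.sum_le_sum_of_subset (Finset.filter_subset _ _)

open Classical in
/-- Deleting a vertex `s` of out-degree `0` with `ℓ ≥ 1` in-neighbours from an oriented graph
with no isolated edges decreases `κ` by at least `ℓ`. -/
theorem kappa_delete_sink {V : Type*} [Fintype V] [DecidableEq V] (E : V → V → Prop)
    (hasym : ∀ u v, E u v → ¬ E v u)
    (hnoiso : ∀ u v, E u v → 1 < degE E u ∨ 1 < degE E v)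
    (s : V) (ℓ : ℕ) (hℓ : 1 ≤ ℓ)
    (hin : (Finset.univ.filter fun u : V => E u s).card = ℓ)
    (hout : ∀ v, ¬ E s v) :
    kappa (fun u v => E u v ∧ u ≠ s ∧ v ≠ s) + ℓ ≤ kappa E := by
  classical
  obtain ⟨E', hE'⟩ : ∃ E' : V → V → Prop, E' = fun u v => E u v ∧ u ≠ s ∧ v ≠ s := ⟨_, rfl⟩
  rw [show (fun u v => E u v ∧ u ≠ s ∧ v ≠ s) = E' from hE'.symm]
  -- Step A : edgeCount E = edgeCount E' + ℓ
  have hA : edgeCount E = edgeCount E' + ℓ := by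
    unfold edgeCount
    have hsplit := Finset.card_filter_add_card_filter_not
      (s := Finset.univ.filter fun p : V × V => E p.1 p.2) (p := fun p : V × V => p.2 = s)
    rw [Finset.filter_filter, Finset.filter_filter] at hsplit
    have h1 : (Finset.univ.filter fun p : V × V => E p.1 p.2 ∧ p.2 = s)
        = (Finset.univ.filter fun u : V => E u s).image (fun u => (u, s)) := by
      ext p
      simp only [Finset.mem_filter, Finset.mem_univ, true_and, Finset.mem_image]
      constructor
      · rintro ⟨ha, hb⟩
        exact ⟨p.1, by rw [← hb]; exact ⟨ha, rfl⟩⟩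
      · rintro ⟨u, hu, rfl⟩
        exact ⟨hu, rfl⟩
    have h2 : (Finset.univ.filter fun p : V × V => E p.1 p.2 ∧ ¬ p.2 = s)
        = (Finset.univ.filter fun p : V × V => E' p.1 p.2) := by
      apply Finset.filter_congr
      intro p _
      simp only [hE', eq_iff_iff]
      constructor
      · rintro ⟨ha, hb⟩
        refine ⟨ha, ?_, hb⟩
        intro heq
        rw [heq] at ha
        exact hout _ ha
      · rintro ⟨ha, _, hc⟩
        exact ⟨ha, hc⟩
    rw [h1, h2, Finset.card_image_of_injective _ (fun a b h => congrArg Prod.fst h), hin]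
      at hsplit
    omega
  -- degree of s in E
  have hdegs : degE E s = ℓ := by
    unfold degE
    rw [← hin]
    congr 1
    apply Finset.filter_congr
    intro u _
    simp [hout u]
  -- Step C : degrees away from s
  have hC : ∀ v : V, v ≠ s →
      degE E v = degE E' v + (if E v s then 1 else 0) := by
    intro v hv
    unfold degE
    have h1 : (Finset.univ.filter fun u : V => E' u v ∨ E' v u)
        = (Finset.univ.filter fun u : V => (E u v ∨ E v u) ∧ ¬ u = s) := by
      apply Finset.filter_congr
      intro u _
      simp only [hE', eq_iff_iff]
      constructor
      · rintro (⟨ha, hb, hc⟩ | ⟨ha, hb, hc⟩)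
        · exact ⟨Or.inl ha, hb⟩
        · exact ⟨Or.inr ha, hc⟩
      · rintro ⟨ha | ha, hb⟩
        · exact Or.inl ⟨ha, hb, hv⟩
        · exact Or.inr ⟨ha, hv, hb⟩
    rw [h1]
    have hsplit := Finset.card_filter_add_card_filter_not
      (s := Finset.univ.filter fun u : V => E u v ∨ E v u) (p := fun u : V => ¬ u = s)
    rw [Finset.filter_filter, Finset.filter_filter] at hsplit
    have h3 : (Finset.univ.filter fun u : V => (E u v ∨ E v u) ∧ ¬ ¬ u = s)
        = if E v s then {s} else ∅ := by
      ext u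
      simp only [Finset.mem_filter, Finset.mem_univ, true_and, not_not]
      by_cases h : E v s
      · simp only [h, if_true, Finset.mem_singleton]
        constructor
        · rintro ⟨_, hb⟩; exact hb
        · rintro hb; subst hb; exact ⟨Or.inr h, rfl⟩
      · simp only [h, if_false, Finset.notMem_empty, iff_false]
        rintro ⟨ha | ha, hb⟩
        · rw [hb] at ha; exact hout _ ha
        · rw [hb] at ha; exact h ha
    rw [h3] at hsplit
    by_cases h : E v s
    · simp only [h, if_true, Finset.card_singleton] at hsplit ⊢
      omega
    · simp only [h, if_false, Finset.card_empty] at hsplit ⊢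
      omega
  -- Step D : degree-one vertices
  have hD : (Finset.univ.filter fun v : V => degE E v = 1).card
      ≤ (Finset.univ.filter fun v : V => degE E' v = 1).card + ℓ := by
    set X : Finset V := if ℓ = 1 then {s} else Finset.univ.filter (fun u : V => E u s)
      with hX
    have hXcard : X.card ≤ ℓ := by
      rw [hX]
      by_cases h : ℓ = 1
      · simp [h]
      · simp [h, hin]
    have hsub : (Finset.univ.filter fun v : V => degE E v = 1)
        ⊆ (Finset.univ.filter fun v : V => degE E' v = 1) ∪ X := by
      intro v hv
      simp only [Finset.mem_filter, Finset.mem_univ, true_and] at hv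
      by_cases hvs : v = s
      · subst hvs
        have : ℓ = 1 := by rw [← hdegs]; exact hv
        rw [Finset.mem_union, hX]
        right
        simp [this]
      · by_cases hvse : E v s
        · -- v is an in-neighbour of s of degree 1; then ℓ ≠ 1 by no isolated edge
          have hne : ℓ ≠ 1 := by
            intro h1
            rcases hnoiso v s hvse with h | h
            · omega
            · rw [hdegs] at h; omega
          rw [Finset.mem_union, hX]
          right
          simp [hne, hvse]
        · rw [Finset.mem_union]
          left
          simp only [Finset.mem_filter, Finset.mem_univ, true_and]
          have := hC v hvs
          rw [if_neg hvse] at this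
          omega
    calc (Finset.univ.filter fun v : V => degE E v = 1).card
        ≤ ((Finset.univ.filter fun v : V => degE E' v = 1) ∪ X).card :=
          Finset.card_le_card hsub
      _ ≤ (Finset.univ.filter fun v : V => degE E' v = 1).card + X.card :=
          Finset.card_union_le _ _
      _ ≤ _ := by omega
  -- Step E : d₁(E') ≤ 2 * edgeCount E'
  have hasym' : ∀ u v, E' u v → ¬ E' v u := by
    intro u v h h'
    rw [hE'] at h h'
    exact hasym u v h.1 h'.1
  have hE'bound : (Finset.univ.filter fun v : V => degE E' v = 1).card
      ≤ 2 * edgeCount E' := by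
    calc _ ≤ ∑ v, degE E' v := d1_le_sum E'
      _ = 2 * edgeCount E' := sum_degE_eq E' hasym'
  unfold kappa
  omega
end

section
/- Let H be an oriented graph, let s be a vertex of H with in-neighbours u₁,…,u_ℓ where ℓ ≥ 2 and out-degree 0, and let H'' be the graph obtained from H by adding a new vertex s', removing the edge (u₁, s), and adding the edge (u₁, s'). Then κ(H'') ≤ κ(H) − 1, where κ(H) = 2|E(H)| − d₁(H). -/
/-- The graph `H''` obtained from `H` by adding a new vertex `s'`, removing the edge
`(u₁, s)` and adding the edge `(u₁, s')`.  The new vertex is `Sum.inr ()`. -/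
def redirect {V : Type*} (E : V → V → Prop) (u₁ s : V) :
    V ⊕ Unit → V ⊕ Unit → Prop :=
  fun a b =>
    match a, b with
    | Sum.inl u, Sum.inl v => E u v ∧ ¬(u = u₁ ∧ v = s)
    | Sum.inl u, Sum.inr _ => u = u₁
    | _, _ => False

open Classical

section helpers
variable {V : Type*} [Fintype V] [DecidableEq V]

lemma redirect_ll {E : V → V → Prop} {u₁ s u v : V} :
    redirect E u₁ s (Sum.inl u) (Sum.inl v) ↔ E u v ∧ ¬(u = u₁ ∧ v = s) := Iff.rfl

lemma redirect_lr {E : V → V → Prop} {u₁ s u : V} {x : Unit} :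
    redirect E u₁ s (Sum.inl u) (Sum.inr x) ↔ u = u₁ := Iff.rfl

lemma redirect_r {E : V → V → Prop} {u₁ s : V} {x : Unit} (b : V ⊕ Unit) :
    ¬ redirect E u₁ s (Sum.inr x) b := by cases b <;> exact fun h => h

lemma mem_filter_univ {α : Type*} [Fintype α] {p : α → Prop} [DecidablePred p] {a : α} :
    a ∈ Finset.univ.filter p ↔ p a := by simp

lemma edgeCount_redirect (E : V → V → Prop) (u₁ s : V) (hu₁ : E u₁ s) :
    edgeCount (redirect E u₁ s) = edgeCount E := by
  classical
  unfold edgeCount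
  refine Finset.card_nbij'
    (fun p => match p with
      | (Sum.inl u, Sum.inl v) => (u, v)
      | _ => (u₁, s))
    (fun p => if p.1 = u₁ ∧ p.2 = s then (Sum.inl u₁, Sum.inr ()) else (Sum.inl p.1, Sum.inl p.2))
    ?_ ?_ ?_ ?_
  · rintro ⟨(a|a), (b|b)⟩ hp <;> rw [Finset.mem_coe, mem_filter_univ] at hp ⊢ <;> dsimp only at hp ⊢
    · exact hp.1
    · exact hu₁
    · exact absurd hp (redirect_r _)
    · exact absurd hp (redirect_r _)
  · rintro ⟨a, b⟩ hp
    rw [Finset.mem_coe, mem_filter_univ] at hp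
    dsimp only at hp ⊢
    by_cases h : a = u₁ ∧ b = s
    · rw [if_pos h, Finset.mem_coe, mem_filter_univ]
      exact rfl
    · rw [if_neg h, Finset.mem_coe, mem_filter_univ]
      exact ⟨hp, h⟩
  · rintro ⟨(a|a), (b|b)⟩ hp <;> rw [Finset.mem_coe, mem_filter_univ] at hp <;> dsimp only at hp ⊢
    · rw [if_neg hp.2]
    · rw [redirect_lr] at hp
      subst hp
      rw [if_pos ⟨rfl, rfl⟩]
    · exact absurd hp (redirect_r _)
    · exact absurd hp (redirect_r _)
  · rintro ⟨a, b⟩ hp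
    dsimp only
    by_cases h : a = u₁ ∧ b = s
    · obtain ⟨h1, h2⟩ := h; subst h1; subst h2
      rw [if_pos ⟨rfl, rfl⟩]
    · rw [if_neg h]

lemma degE_redirect_inl (E : V → V → Prop) (u₁ s : V) (hu₁ : E u₁ s)
    (hout : ∀ v, ¬ E s v) (v : V) (hvs : v ≠ s) :
    degE (redirect E u₁ s) (Sum.inl v) = degE E v := by
  classical
  unfold degE
  refine (Finset.card_nbij'
    (fun w => if v = u₁ ∧ w = s then Sum.inr () else Sum.inl w)
    (fun x => match x with
      | Sum.inl w => w
      | Sum.inr _ => s)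
    ?_ ?_ ?_ ?_).symm
  · intro w hw
    rw [Finset.mem_coe, mem_filter_univ] at hw ⊢
    dsimp only
    by_cases h : v = u₁ ∧ w = s
    · rw [if_pos h]
      right; rw [redirect_lr]; exact h.1
    · rw [if_neg h]
      rcases hw with hw | hw
      · left; rw [redirect_ll]; exact ⟨hw, fun hc => hvs hc.2⟩
      · right; rw [redirect_ll]; exact ⟨hw, h⟩
  · rintro (w | w) hw <;> rw [Finset.mem_coe, mem_filter_univ] at hw ⊢ <;> dsimp only at hw ⊢
    · rcases hw with hw | hw
      · left; exact hw.1
      · right; exact hw.1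
    · rcases hw with hw | hw
      · exact absurd hw (redirect_r _)
      · rw [redirect_lr] at hw
        right; rw [hw]; exact hu₁
  · intro w hw
    dsimp only
    by_cases h : v = u₁ ∧ w = s
    · rw [if_pos h]; exact h.2.symm
    · rw [if_neg h]
  · rintro (w | w) hw <;> rw [Finset.mem_coe, mem_filter_univ] at hw <;> dsimp only at hw ⊢
    · have h : ¬ (v = u₁ ∧ w = s) := by
        rintro ⟨h1, h2⟩
        subst h1; subst h2
        rcases hw with hw | hw
        · exact hout _ (redirect_ll.mp hw).1
        · exact (redirect_ll.mp hw).2 ⟨rfl, rfl⟩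
      rw [if_neg h]
    · rcases hw with hw | hw
      · exact absurd hw (redirect_r _)
      · rw [redirect_lr] at hw
        rw [if_pos ⟨hw, rfl⟩]

lemma degE_redirect_inr (E : V → V → Prop) (u₁ s : V) :
    degE (redirect E u₁ s) (Sum.inr ()) = 1 := by
  classical
  unfold degE
  have : (Finset.univ.filter fun u : V ⊕ Unit =>
      redirect E u₁ s u (Sum.inr ()) ∨ redirect E u₁ s (Sum.inr ()) u) = {Sum.inl u₁} := by
    ext x
    rw [mem_filter_univ, Finset.mem_singleton]
    constructor
    · rintro (h | h)
      · cases x with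
        | inl w => rw [redirect_lr] at h; rw [h]
        | inr w => exact absurd h (redirect_r _)
      · exact absurd h (redirect_r _)
    · rintro rfl
      left; rw [redirect_lr]
  rw [this, Finset.card_singleton]

end helpers

section main
variable {V : Type*} [Fintype V] [DecidableEq V]

lemma sum_degE (E : V → V → Prop) (hasym : ∀ u v, E u v → ¬ E v u) :
    ∑ v : V, degE E v = 2 * edgeCount E := by
  classical
  have h1 : ((Finset.univ : Finset (V × V)).filter fun p => E p.1 p.2 ∨ E p.2 p.1).card
      = ∑ v : V, degE E v := by
    rw [Finset.card_eq_sum_card_fiberwise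
      (f := fun p : V × V => p.2) (t := Finset.univ) (fun x _ => Finset.mem_univ _)]
    refine Finset.sum_congr rfl fun v _ => ?_
    unfold degE
    refine Finset.card_nbij' (fun p => p.1) (fun u => (u, v)) ?_ ?_ ?_ ?_
    · intro p hp
      simp only [Finset.mem_coe, Finset.mem_filter, Finset.mem_univ, true_and] at hp ⊢
      rw [← hp.2]; exact hp.1
    · intro u hu
      simp only [Finset.mem_coe, Finset.mem_filter, Finset.mem_univ, true_and] at hu ⊢
      exact ⟨hu, trivial⟩
    · intro p hp
      simp only [Finset.mem_coe, Finset.mem_filter, Finset.mem_univ, true_and] at hp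
      dsimp only
      rw [← hp.2]
    · intro u _; rfl
  have h2 : ((Finset.univ : Finset (V × V)).filter fun p => E p.1 p.2 ∨ E p.2 p.1).card
      = 2 * edgeCount E := by
    rw [Finset.filter_or, Finset.card_union_of_disjoint]
    · have hswap : ((Finset.univ : Finset (V × V)).filter fun p => E p.2 p.1).card
          = edgeCount E := by
        unfold edgeCount
        refine Finset.card_nbij' (fun p => (p.2, p.1)) (fun p => (p.2, p.1)) ?_ ?_ ?_ ?_
        · intro p hp
          simp only [Finset.mem_coe, Finset.mem_filter, Finset.mem_univ, true_and] at hp ⊢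
          exact hp
        · intro p hp
          simp only [Finset.mem_coe, Finset.mem_filter, Finset.mem_univ, true_and] at hp ⊢
          exact hp
        · intro p _; rfl
        · intro p _; rfl
      unfold edgeCount
      rw [hswap]
      unfold edgeCount
      ring
    · rw [Finset.disjoint_filter]
      intro p _ h1 h2
      exact hasym _ _ h1 h2
  rw [← h1, h2]

theorem kappa_redirect' (E : V → V → Prop)
    (hasym : ∀ u v, E u v → ¬ E v u)
    (s u₁ : V) (ℓ : ℕ) (hℓ : 2 ≤ ℓ)
    (hin : (Finset.univ.filter fun u : V => E u s).card = ℓ)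
    (hu₁ : E u₁ s)
    (hout : ∀ v, ¬ E s v) :
    kappa (redirect E u₁ s) + 1 ≤ kappa E := by
  classical
  have hm : edgeCount (redirect E u₁ s) = edgeCount E := edgeCount_redirect E u₁ s hu₁
  have hdegs : degE E s = ℓ := by
    unfold degE
    rw [← hin]
    congr 1
    apply Finset.filter_congr
    intro u _
    simp [hout u]
  set A := (Finset.univ.filter fun v : V => degE E v = 1) with hA
  set B := (Finset.univ.filter fun x : V ⊕ Unit => degE (redirect E u₁ s) x = 1) with hB
  have hsub : insert (Sum.inr () : V ⊕ Unit) (A.image (Sum.inl : V → V ⊕ Unit)) ⊆ B := by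
    intro x hx
    rw [Finset.mem_insert] at hx
    rcases hx with rfl | hx
    · rw [hB, mem_filter_univ]
      exact degE_redirect_inr E u₁ s
    · obtain ⟨v, hv, rfl⟩ := Finset.mem_image.mp hx
      rw [hA, mem_filter_univ] at hv
      rw [hB, mem_filter_univ]
      have hvs : v ≠ s := by
        rintro rfl
        rw [hdegs] at hv
        omega
      rw [degE_redirect_inl E u₁ s hu₁ hout v hvs]
      exact hv
  have hBcard : A.card + 1 ≤ B.card := by
    have h1 : (insert (Sum.inr () : V ⊕ Unit) (A.image (Sum.inl : V → V ⊕ Unit))).card = A.card + 1 := by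
      rw [Finset.card_insert_of_notMem (by simp), Finset.card_image_of_injective _ Sum.inl_injective]
    exact h1 ▸ Finset.card_le_card hsub
  have hsum : ∑ v : V, degE E v = 2 * edgeCount E := sum_degE E hasym
  have hA2 : A.card + 2 ≤ 2 * edgeCount E := by
    have hs_not : s ∉ A := by
      rw [hA, mem_filter_univ, hdegs]
      omega
    have hsumA : ∑ v ∈ A, degE E v = A.card := by
      have hone : ∀ v ∈ A, degE E v = 1 := fun v hv => (Finset.mem_filter.mp hv).2
      rw [Finset.sum_congr rfl hone]
      simp
    have hchain : A.card + degE E s ≤ ∑ v : V, degE E v := by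
      calc A.card + degE E s = degE E s + ∑ v ∈ A, degE E v := by rw [hsumA]; ring
        _ = ∑ v ∈ insert s A, degE E v := (Finset.sum_insert hs_not).symm
        _ ≤ ∑ v : V, degE E v :=
            Finset.sum_le_sum_of_subset (Finset.subset_univ _)
    rw [hsum] at hchain
    omega
  unfold kappa
  rw [hm, ← hA, ← hB]
  omega

end main

open Classical in
/-- Redirecting one of `ℓ ≥ 2` in-edges of a sink `s` to a new vertex `s'` decreases `κ`
by at least `1`. -/
theorem kappa_redirect {V : Type*} [Fintype V] [DecidableEq V] (E : V → V → Prop)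
    (hasym : ∀ u v, E u v → ¬ E v u)
    (s u₁ : V) (ℓ : ℕ) (hℓ : 2 ≤ ℓ)
    (hin : (Finset.univ.filter fun u : V => E u s).card = ℓ)
    (hu₁ : E u₁ s)
    (hout : ∀ v, ¬ E s v) :
    kappa (redirect E u₁ s) + 1 ≤ kappa E := by
  exact kappa_redirect' E hasym s u₁ ℓ hℓ hin hu₁ hout
end

section
/- Let G be a finite abelian group, A₁, A₂, B₁, B₂ ⊆ G with B₁, B₂ nonempty, p a positive integer, and for t ∈ G^p set A_j'(t) = B_j ∩ ⋂_{k=1}^p (A_j − t_k). Then for every x ∈ G, E_{t∈G^p} (1_{A₁'(t)} ∘ 1_{A₂'(t)})(x) = (1_{A₁} ∘ 1_{A₂})(x)^p · (1_{B₁} ∘ 1_{B₂})(x), where (f∘g)(x) = E_{y∈G} f(y)g(y−x). -/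
/-- Indicator function of a finite set, real-valued. -/
def ind {G : Type*} [DecidableEq G] (S : Finset G) (y : G) : ℝ :=
  if y ∈ S then 1 else 0

lemma ind_filter {G : Type*} [AddCommGroup G] [DecidableEq G] [Fintype G] (B A : Finset G) {p : ℕ}
    (t : Fin p → G) (y : G) :
    ind (B.filter fun z => ∀ k : Fin p, z + t k ∈ A) y
      = ind B y * ∏ k : Fin p, ind A (y + t k) := by
  simp only [ind, Finset.mem_filter]
  by_cases hy : y ∈ B
  · by_cases h : ∀ k : Fin p, y + t k ∈ A
    · simp [hy, h]
    · push_neg at h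
      obtain ⟨k, hk⟩ := h
      rw [if_neg (by tauto), if_pos hy, one_mul]
      exact (Finset.prod_eq_zero (Finset.mem_univ k)
        (if_neg hk : (if y + t k ∈ A then (1:ℝ) else 0) = 0)).symm
  · simp [hy]

lemma sum_shift {G : Type*} [AddCommGroup G] [Fintype G] [DecidableEq G]
    (A₁ A₂ : Finset G) (x y : G) :
    ∑ s : G, ind A₁ (y + s) * ind A₂ (y - x + s)
      = ∑ z : G, ind A₁ z * ind A₂ (z - x) := by
  apply Fintype.sum_equiv (Equiv.addLeft y)
  intro s
  have h : y - x + s = y + s - x := by abel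
  rw [Equiv.coe_addLeft, h]

lemma sum_prod_pow {G : Type*} [Fintype G] (n : ℕ) (h : G → ℝ) :
    ∑ t : Fin n → G, ∏ k : Fin n, h (t k) = (∑ s : G, h s) ^ n := by
  have e : (∑ s : G, h s) ^ n = ∏ _k : Fin n, (∑ s : G, h s) := by simp
  rw [e, Finset.prod_univ_sum, Fintype.piFinset_univ]

/-- Pointwise expected value of the difference convolution of the indicators of the sifted sets
`A_j'(t) = B_j ∩ ⋂_k (A_j − t_k)`:
`E_t (1_{A₁'(t)} ∘ 1_{A₂'(t)})(x) = (1_{A₁} ∘ 1_{A₂})(x)^p · (1_{B₁} ∘ 1_{B₂})(x)`. -/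
theorem expected_conv_sifted {G : Type*} [AddCommGroup G] [Fintype G] [DecidableEq G]
    (A₁ A₂ B₁ B₂ : Finset G) (hB₁ : B₁.Nonempty) (hB₂ : B₂.Nonempty)
    (p : ℕ) (hp : 0 < p) (x : G) :
    (∑ t : Fin p → G,
        (∑ y : G, ind (B₁.filter fun z => ∀ k : Fin p, z + t k ∈ A₁) y *
            ind (B₂.filter fun z => ∀ k : Fin p, z + t k ∈ A₂) (y - x)) /
          (Fintype.card G : ℝ)) / (Fintype.card G : ℝ) ^ p
      = ((∑ y : G, ind A₁ y * ind A₂ (y - x)) / (Fintype.card G : ℝ)) ^ p *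
          ((∑ y : G, ind B₁ y * ind B₂ (y - x)) / (Fintype.card G : ℝ)) := by
  have key : ∑ t : Fin p → G,
        ∑ y : G, ind (B₁.filter fun z => ∀ k : Fin p, z + t k ∈ A₁) y *
            ind (B₂.filter fun z => ∀ k : Fin p, z + t k ∈ A₂) (y - x)
      = (∑ y : G, ind A₁ y * ind A₂ (y - x)) ^ p *
          (∑ y : G, ind B₁ y * ind B₂ (y - x)) := by
    rw [Finset.sum_comm]
    have : ∀ y : G,
        ∑ t : Fin p → G, ind (B₁.filter fun z => ∀ k : Fin p, z + t k ∈ A₁) y *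
            ind (B₂.filter fun z => ∀ k : Fin p, z + t k ∈ A₂) (y - x)
        = (∑ z : G, ind A₁ z * ind A₂ (z - x)) ^ p * (ind B₁ y * ind B₂ (y - x)) := by
      intro y
      have step : ∀ t : Fin p → G,
          ind (B₁.filter fun z => ∀ k : Fin p, z + t k ∈ A₁) y *
            ind (B₂.filter fun z => ∀ k : Fin p, z + t k ∈ A₂) (y - x)
          = (ind B₁ y * ind B₂ (y - x)) *
              ∏ k : Fin p, (ind A₁ (y + t k) * ind A₂ (y - x + t k)) := by
        intro t
        rw [ind_filter, ind_filter, Finset.prod_mul_distrib]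
        ring
      simp_rw [step]
      rw [← Finset.mul_sum]
      rw [sum_prod_pow p (fun s => ind A₁ (y + s) * ind A₂ (y - x + s)), sum_shift]
      ring
    rw [Finset.sum_congr rfl fun y _ => this y, ← Finset.mul_sum]
  rw [div_pow, div_mul_div_comm, ← key, ← Finset.sum_div, div_div,
    mul_comm ((Fintype.card G : ℝ)) _]
end

section
/- Dependent random choice / sifting lemma: Let G be a finite abelian group, ε, δ ∈ (0,1], and let p ≥ ε^{−1}log(2/δ) be an integer. Let B₁, B₂ ⊆ G be nonempty, A₁, A₂ ⊆ G of densities α₁, α₂ > 0, set μ = μ_{B₁} ∘ μ_{B₂}, and S = {x ∈ G : (μ_{A₁}∘μ_{A₂})(x) ≥ (1−ε)·‖μ_{A₁}∘μ_{A₂}‖_{L^p(μ)}}. Then for each j ∈ {1,2} there exists A_j' ⊆ B_j of relative density at least (1/4)·(α_j·‖μ_{A₁}∘μ_{A₂}‖_{L^p(μ)})^p in B_j such that ⟨μ_{A₁'} ∘ μ_{A₂'}, 1_S⟩ ≥ 1 − δ. -/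
/-- Normalized indicator `μ_S = μ(S)⁻¹·1_S` of a finite set `S ⊆ G`. -/
noncomputable def mus {G : Type*} [Fintype G] [DecidableEq G] (S : Finset G) : G → ℝ :=
  fun y => if y ∈ S then (Fintype.card G : ℝ) / S.card else 0

/-- Normalized difference convolution `(f ∘ g)(x) = E_y f(y)·g(y−x)`. -/
noncomputable def dconv {G : Type*} [AddCommGroup G] [Fintype G] (f g : G → ℝ) : G → ℝ :=
  fun x => (∑ y : G, f y * g (y - x)) / Fintype.card G


open Finset in
lemma dconv_mus_eq {G : Type*} [AddCommGroup G] [Fintype G] [DecidableEq G]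
    (C D : Finset G) (x : G) :
    dconv (mus C) (mus D) x
      = (Fintype.card G : ℝ) / (C.card * D.card) * ((C.filter fun a => a - x ∈ D).card : ℝ) := by
  classical
  have h : ∀ y : G, mus C y * mus D (y - x)
      = if y ∈ C ∧ y - x ∈ D then ((Fintype.card G : ℝ) / C.card) * ((Fintype.card G : ℝ) / D.card) else 0 := by
    intro y; simp only [mus]; split_ifs with h1 <;> simp_all <;> tauto
  simp only [dconv, h]
  rw [← Finset.sum_filter]
  have : (Finset.univ.filter fun y : G => y ∈ C ∧ y - x ∈ D) = C.filter fun a => a - x ∈ D := by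
    ext a; simp
  have hN : (0:ℝ) < (Fintype.card G : ℝ) := by positivity
  rw [Finset.sum_const, this, nsmul_eq_mul, div_mul_div_comm, mul_div_assoc,
    mul_comm ((Fintype.card G : ℝ) / ((C.card : ℝ) * D.card))]
  congr 1
  rw [div_div, mul_comm ((C.card : ℝ) * (D.card : ℝ)), mul_div_mul_left _ _ hN.ne']

lemma dconv_mus_inner {G : Type*} [AddCommGroup G] [Fintype G] [DecidableEq G]
    (C D : Finset G) (F : G → ℝ) :
    ∑ x : G, dconv (mus C) (mus D) x * F x
      = (Fintype.card G : ℝ) / (C.card * D.card) * ∑ c ∈ C, ∑ d ∈ D, F (c - d) := by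
  classical
  simp only [dconv_mus_eq, mul_assoc, ← Finset.mul_sum]
  congr 1
  have hcard : ∀ x : G, ((C.filter fun a => a - x ∈ D).card : ℝ)
      = ∑ c ∈ C, if c - x ∈ D then (1:ℝ) else 0 := by
    intro x; rw [Finset.card_filter]; push_cast; simp [Finset.sum_ite]
  calc ∑ x : G, ((C.filter fun a => a - x ∈ D).card : ℝ) * F x
      = ∑ x : G, ∑ c ∈ C, (if c - x ∈ D then (1:ℝ) else 0) * F x := by
        simp only [hcard, Finset.sum_mul]
    _ = ∑ c ∈ C, ∑ x : G, (if c - x ∈ D then (1:ℝ) else 0) * F x := Finset.sum_comm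
    _ = ∑ c ∈ C, ∑ d ∈ D, F (c - d) := by
        refine Finset.sum_congr rfl fun c _ => ?_
        rw [show (∑ x : G, (if c - x ∈ D then (1:ℝ) else 0) * F x)
            = ∑ d : G, (if d ∈ D then (1:ℝ) else 0) * F (c - d) from
          Fintype.sum_equiv (Equiv.subLeft c) _ _ (fun x => by simp)]
        simp [Finset.sum_ite, Finset.sum_filter]

noncomputable def sift {G : Type*} [AddCommGroup G] [Fintype G] [DecidableEq G]
    (A B : Finset G) (p : ℕ) (s : Fin p → G) : Finset G :=
  B.filter fun c => ∀ i, c + s i ∈ A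

lemma sum_card_sift {G : Type*} [AddCommGroup G] [Fintype G] [DecidableEq G]
    (A B : Finset G) (p : ℕ) :
    ∑ s : Fin p → G, ((sift A B p s).card : ℝ) = (B.card : ℝ) * (A.card : ℝ) ^ p := by
  classical
  have hcard : ∀ s : Fin p → G, ((sift A B p s).card : ℝ)
      = ∑ d ∈ B, ∏ i, (if d + s i ∈ A then (1:ℝ) else 0) := by
    intro s
    rw [sift, Finset.card_filter]
    push_cast
    refine Finset.sum_congr rfl fun d _ => ?_
    by_cases h : ∀ i, d + s i ∈ A
    · simp [h]
    · push_neg at h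
      obtain ⟨i, hi⟩ := h
      rw [if_neg (by push_neg; exact ⟨i, hi⟩), eq_comm]
      exact Finset.prod_eq_zero (Finset.mem_univ i) (by simp [hi])
  simp only [hcard]
  rw [Finset.sum_comm]
  have : ∀ d : G, (∑ s : Fin p → G, ∏ i, (if d + s i ∈ A then (1:ℝ) else 0))
      = (A.card : ℝ) ^ p := by
    intro d
    rw [show (∑ s : Fin p → G, ∏ i, (if d + s i ∈ A then (1:ℝ) else 0))
        = (∑ t : G, if d + t ∈ A then (1:ℝ) else 0) ^ p from
      (Fintype.sum_pow (fun t => if d + t ∈ A then (1:ℝ) else 0) p).symm]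
    have : (∑ t : G, if d + t ∈ A then (1:ℝ) else 0) = (A.card : ℝ) := by
      rw [Fintype.sum_equiv (Equiv.addLeft d) _ (fun t => if t ∈ A then (1:ℝ) else 0)
        (fun t => by simp; congr)]
      simp [Finset.sum_ite, Finset.sum_filter]
    rw [this]
  simp [this, Finset.sum_const, nsmul_eq_mul]

lemma prod_ite_one {ι : Type*} [Fintype ι] (R : ι → Prop) [DecidablePred R] :
    (∏ i, if R i then (1:ℝ) else 0) = if (∀ i, R i) then 1 else 0 := by
  by_cases h : ∀ i, R i
  · simp [h]
  · push_neg at h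
    obtain ⟨i, hi⟩ := h
    rw [if_neg (by push_neg; exact ⟨i, hi⟩)]
    exact Finset.prod_eq_zero (Finset.mem_univ i) (by simp [hi])

lemma card_filter_real {G : Type*} [Fintype G] [DecidableEq G]
    (A : Finset G) (P : G → Prop) [DecidablePred P] :
    ((A.filter P).card : ℝ) = ∑ t : G, if t ∈ A ∧ P t then (1:ℝ) else 0 := by
  rw [show A.filter P = Finset.univ.filter (fun t => t ∈ A ∧ P t) by ext t; simp,
    Finset.card_filter]
  push_cast
  refine Finset.sum_congr rfl fun t _ => ?_
  split_ifs <;> simp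

lemma ind_mul_ind_mul (X Y Z W : Prop) [Decidable X] [Decidable Y] [Decidable Z] [Decidable W]
    (h : X ∧ Y ↔ Z ∧ W) (r : ℝ) :
    (if X then (1:ℝ) else 0) * ((if Y then (1:ℝ) else 0) * r)
      = (if Z then (1:ℝ) else 0) * ((if W then (1:ℝ) else 0) * r) := by
  have key : ∀ (U V : Prop) [Decidable U] [Decidable V],
      (if U then (1:ℝ) else 0) * ((if V then (1:ℝ) else 0) * r) = if U ∧ V then r else 0 := by
    intro U V _ _
    by_cases hU : U <;> by_cases hV : V <;> simp [hU, hV]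
  rw [key, key, if_congr h rfl rfl]

lemma sum_sift_expand {G : Type*} [AddCommGroup G] [Fintype G] [DecidableEq G]
    (A B : Finset G) (p : ℕ) (s : Fin p → G) (h : G → ℝ) :
    (∑ c ∈ sift A B p s, h c)
      = ∑ c : G, (if c ∈ B ∧ ∀ i, c + s i ∈ A then (1:ℝ) else 0) * h c := by
  classical
  rw [show sift A B p s = Finset.univ ∩ sift A B p s from (Finset.univ_inter _).symm,
    ← Finset.sum_ite_mem]
  refine Finset.sum_congr rfl fun c _ => ?_
  by_cases hc : c ∈ B ∧ ∀ i, c + s i ∈ A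
  · rw [if_pos (by simp [sift, Finset.mem_filter]; tauto), if_pos hc, one_mul]
  · rw [if_neg (by simp only [sift, Finset.mem_filter]; tauto), if_neg hc, zero_mul]

lemma master {G : Type*} [AddCommGroup G] [Fintype G] [DecidableEq G]
    (A₁ A₂ B₁ B₂ : Finset G) (p : ℕ) (F : G → ℝ) :
    ∑ x : G, ((A₁.filter fun a => a - x ∈ A₂).card : ℝ) ^ p *
        ((B₁.filter fun c => c - x ∈ B₂).card : ℝ) * F x
      = ∑ s : Fin p → G, ∑ c ∈ sift A₁ B₁ p s, ∑ d ∈ sift A₂ B₂ p s, F (c - d) := by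
  classical
  have lhs_eq : ∑ x : G, ((A₁.filter fun a => a - x ∈ A₂).card : ℝ) ^ p *
        ((B₁.filter fun c => c - x ∈ B₂).card : ℝ) * F x
      = ∑ z : G × G × (Fin p → G),
          (∏ i, if z.2.2 i ∈ A₁ ∧ z.2.2 i - z.1 ∈ A₂ then (1:ℝ) else 0) *
          ((if z.2.1 ∈ B₁ ∧ z.2.1 - z.1 ∈ B₂ then (1:ℝ) else 0) * F z.1) := by
    rw [Fintype.sum_prod_type]
    refine Finset.sum_congr rfl fun x _ => ?_
    have hA : ((A₁.filter fun a => a - x ∈ A₂).card : ℝ) ^ p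
        = ∑ a : Fin p → G, ∏ i, if a i ∈ A₁ ∧ a i - x ∈ A₂ then (1:ℝ) else 0 := by
      rw [card_filter_real, Fintype.sum_pow]
    have hB : ((B₁.filter fun c => c - x ∈ B₂).card : ℝ)
        = ∑ c : G, if c ∈ B₁ ∧ c - x ∈ B₂ then (1:ℝ) else 0 := card_filter_real _ _
    rw [Fintype.sum_prod_type]
    symm
    calc ∑ c : G, ∑ a : Fin p → G,
            (∏ i, if a i ∈ A₁ ∧ a i - x ∈ A₂ then (1:ℝ) else 0) *
            ((if c ∈ B₁ ∧ c - x ∈ B₂ then (1:ℝ) else 0) * F x)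
        = ∑ c : G, ((A₁.filter fun a => a - x ∈ A₂).card : ℝ) ^ p *
            ((if c ∈ B₁ ∧ c - x ∈ B₂ then (1:ℝ) else 0) * F x) := by
          refine Finset.sum_congr rfl fun c _ => ?_
          rw [← Finset.sum_mul, ← hA]
      _ = ((A₁.filter fun a => a - x ∈ A₂).card : ℝ) ^ p *
            ∑ c : G, ((if c ∈ B₁ ∧ c - x ∈ B₂ then (1:ℝ) else 0) * F x) := by
          rw [Finset.mul_sum]
      _ = ((A₁.filter fun a => a - x ∈ A₂).card : ℝ) ^ p *
            (((B₁.filter fun c => c - x ∈ B₂).card : ℝ) * F x) := by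
          rw [← Finset.sum_mul, ← hB]
      _ = ((A₁.filter fun a => a - x ∈ A₂).card : ℝ) ^ p *
            ((B₁.filter fun c => c - x ∈ B₂).card : ℝ) * F x := by ring
  have rhs_eq : ∑ s : Fin p → G, ∑ c ∈ sift A₁ B₁ p s, ∑ d ∈ sift A₂ B₂ p s, F (c - d)
      = ∑ z : (Fin p → G) × G × G,
          (∏ i, if z.2.1 + z.1 i ∈ A₁ ∧ z.2.2 + z.1 i ∈ A₂ then (1:ℝ) else 0) *
          ((if z.2.1 ∈ B₁ ∧ z.2.2 ∈ B₂ then (1:ℝ) else 0) * F (z.2.1 - z.2.2)) := by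
    rw [Fintype.sum_prod_type]
    refine Finset.sum_congr rfl fun s _ => ?_
    rw [Fintype.sum_prod_type, sum_sift_expand]
    refine Finset.sum_congr rfl fun c _ => ?_
    rw [sum_sift_expand, Finset.mul_sum]
    refine Finset.sum_congr rfl fun d _ => ?_
    dsimp only
    by_cases h1 : c ∈ B₁ <;> by_cases h2 : d ∈ B₂ <;>
      by_cases h3 : ∀ i, c + s i ∈ A₁ <;> by_cases h4 : ∀ i, d + s i ∈ A₂ <;>
      simp [prod_ite_one, forall_and, h1, h2, h3, h4]
  rw [lhs_eq, rhs_eq]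
  refine Fintype.sum_equiv
    (⟨fun z => (fun i => z.2.2 i - z.2.1, z.2.1, z.2.1 - z.1),
      fun w => (w.2.1 - w.2.2, w.2.1, fun i => w.2.1 + w.1 i),
      ?_, ?_⟩ : G × G × (Fin p → G) ≃ (Fin p → G) × G × G) _ _ ?_
  · rintro ⟨x, c, a⟩
    refine Prod.ext (sub_sub_cancel c x) (Prod.ext rfl ?_)
    funext i; dsimp; abel
  · rintro ⟨s, c, d⟩
    refine Prod.ext ?_ (Prod.ext rfl (sub_sub_cancel c d))
    funext i; dsimp; abel
  · rintro ⟨x, c, a⟩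
    dsimp
    have e1 : ∀ i, c + (a i - c) = a i := fun i => by abel
    have e2 : ∀ i, (c - x) + (a i - c) = a i - x := fun i => by abel
    simp only [e1, e2, sub_sub_cancel]

set_option maxHeartbeats 1000000 in
/-- Dependent random choice / sifting lemma (Lemma A.3): given `p ≥ ε⁻¹ log(2/δ)`, there are
subsets `A_j' ⊆ B_j` of relative density at least `(1/4)(α_j‖μ_{A₁}∘μ_{A₂}‖_{L^p(μ)})^p`
with `⟨μ_{A₁'} ∘ μ_{A₂'}, 1_S⟩ ≥ 1 − δ`, where `S` is the near-maximum level set. -/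
theorem sifting_lemma {G : Type*} [AddCommGroup G] [Fintype G] [DecidableEq G]
    (ε δ : ℝ) (hε : ε ∈ Set.Ioc (0 : ℝ) 1) (hδ : δ ∈ Set.Ioc (0 : ℝ) 1)
    (p : ℕ) (hp : ε⁻¹ * Real.log (2 / δ) ≤ (p : ℝ))
    (B₁ B₂ A₁ A₂ : Finset G) (hB₁ : B₁.Nonempty) (hB₂ : B₂.Nonempty)
    (hA₁ : 0 < A₁.card) (hA₂ : 0 < A₂.card)
    (L : ℝ)
    (hL : L = ((∑ x : G, |dconv (mus A₁) (mus A₂) x| ^ p *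
        dconv (mus B₁) (mus B₂) x) / Fintype.card G) ^ (1 / (p : ℝ)))
    (S : Set G) (hS : S = {x : G | (1 - ε) * L ≤ dconv (mus A₁) (mus A₂) x}) :
    ∃ A₁' A₂' : Finset G, A₁' ⊆ B₁ ∧ A₂' ⊆ B₂ ∧
      (1 / 4) * (((A₁.card : ℝ) / Fintype.card G) * L) ^ p ≤ (A₁'.card : ℝ) / B₁.card ∧
      (1 / 4) * (((A₂.card : ℝ) / Fintype.card G) * L) ^ p ≤ (A₂'.card : ℝ) / B₂.card ∧
      1 - δ ≤ (∑ x : G, dconv (mus A₁') (mus A₂') x * S.indicator 1 x) / Fintype.card G := by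
  classical
  obtain ⟨hε0, hε1⟩ := hε
  obtain ⟨hδ0, hδ1⟩ := hδ
  have hNG : Nonempty G := ⟨0⟩
  have hNnat : 0 < Fintype.card G := Fintype.card_pos
  have hN : (0:ℝ) < (Fintype.card G : ℝ) := by exact_mod_cast hNnat
  have hlog : 0 < Real.log (2 / δ) := Real.log_pos (by rw [lt_div_iff₀ hδ0]; linarith)
  have hp0 : 0 < (p:ℝ) := lt_of_lt_of_le (by positivity) hp
  have hpn : p ≠ 0 := by exact_mod_cast hp0.ne'
  have hmus_nonneg : ∀ (C : Finset G) (y : G), 0 ≤ mus C y := by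
    intro C y; rw [mus]; split_ifs <;> positivity
  have hdconv_nonneg : ∀ (C D : Finset G) (x : G), 0 ≤ dconv (mus C) (mus D) x := by
    intro C D x
    rw [dconv]
    apply div_nonneg _ hN.le
    exact Finset.sum_nonneg fun y _ => mul_nonneg (hmus_nonneg _ _) (hmus_nonneg _ _)
  have hf0 : ∀ x, 0 ≤ dconv (mus A₁) (mus A₂) x := hdconv_nonneg A₁ A₂
  have hν0 : ∀ x, 0 ≤ dconv (mus B₁) (mus B₂) x := hdconv_nonneg B₁ B₂
  have hB₁c : (0:ℝ) < B₁.card := by exact_mod_cast hB₁.card_pos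
  have hB₂c : (0:ℝ) < B₂.card := by exact_mod_cast hB₂.card_pos
  have hA₁c : (0:ℝ) < A₁.card := by exact_mod_cast hA₁
  have hA₂c : (0:ℝ) < A₂.card := by exact_mod_cast hA₂
  have hind01 : ∀ y : G, 0 ≤ S.indicator (1 : G → ℝ) y ∧ S.indicator (1 : G → ℝ) y ≤ 1 := by
    intro y
    rw [Set.indicator_apply]
    split_ifs <;> norm_num
  have hX0 : 0 ≤ (∑ x : G, dconv (mus A₁) (mus A₂) x ^ p * dconv (mus B₁) (mus B₂) x)
      / (Fintype.card G : ℝ) := by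
    apply div_nonneg _ hN.le
    exact Finset.sum_nonneg fun x _ => mul_nonneg (pow_nonneg (hf0 x) p) (hν0 x)
  have hLX : L = ((∑ x : G, dconv (mus A₁) (mus A₂) x ^ p * dconv (mus B₁) (mus B₂) x)
      / (Fintype.card G : ℝ)) ^ (1 / (p:ℝ)) := by
    rw [hL]
    congr 2
    exact Finset.sum_congr rfl fun x _ => by rw [abs_of_nonneg (hf0 x)]
  have hL0 : 0 ≤ L := by rw [hLX]; positivity
  have hLpX : L ^ p = (∑ x : G, dconv (mus A₁) (mus A₂) x ^ p * dconv (mus B₁) (mus B₂) x)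
      / (Fintype.card G : ℝ) := by
    rw [hLX, ← Real.rpow_natCast (_ ^ (1 / (p:ℝ))) p, ← Real.rpow_mul hX0,
      one_div_mul_cancel hp0.ne', Real.rpow_one]
  by_cases hXz : (∑ x : G, dconv (mus A₁) (mus A₂) x ^ p * dconv (mus B₁) (mus B₂) x)
      / (Fintype.card G : ℝ) = 0
  · -- degenerate case : L = 0, S = univ
    have hLz : L = 0 := by rw [hLX, hXz, Real.zero_rpow (by positivity)]
    obtain ⟨b₁, hb₁⟩ := hB₁
    obtain ⟨b₂, hb₂⟩ := hB₂
    refine ⟨{b₁}, {b₂}, Finset.singleton_subset_iff.2 hb₁, Finset.singleton_subset_iff.2 hb₂,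
      ?_, ?_, ?_⟩
    · rw [hLz, mul_zero, zero_pow hpn, mul_zero]; exact div_nonneg (Nat.cast_nonneg _) (Nat.cast_nonneg _)
    · rw [hLz, mul_zero, zero_pow hpn, mul_zero]; exact div_nonneg (Nat.cast_nonneg _) (Nat.cast_nonneg _)
    · have hmem : b₁ - b₂ ∈ S := by
        rw [hS]; simp only [Set.mem_setOf_eq]
        rw [hLz, mul_zero]; exact hf0 _
      rw [dconv_mus_inner]
      simp only [Finset.sum_singleton, Finset.card_singleton, Nat.cast_one, mul_one, one_mul,
        Set.indicator_of_mem hmem, Pi.one_apply, div_one]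
      rw [div_self hN.ne']
      linarith
  have hXpos : 0 < (∑ x : G, dconv (mus A₁) (mus A₂) x ^ p * dconv (mus B₁) (mus B₂) x)
      / (Fintype.card G : ℝ) := lt_of_le_of_ne hX0 (Ne.symm hXz)
  have hLpos : 0 < L := by rw [hLX]; positivity
  -- abbreviations (plain notation, no `set`)
  have hcApos : (0:ℝ) < (Fintype.card G : ℝ) / (A₁.card * A₂.card) := by positivity
  have hcBpos : (0:ℝ) < (Fintype.card G : ℝ) / (B₁.card * B₂.card) := by positivity
  have hccpos : (0:ℝ) < ((Fintype.card G : ℝ) / (A₁.card * A₂.card)) ^ p *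
      ((Fintype.card G : ℝ) / (B₁.card * B₂.card)) := by positivity
  have hn₁0 : ∀ s : Fin p → G, (0:ℝ) ≤ ((sift A₁ B₁ p s).card : ℝ) := fun s => by positivity
  have hn₂0 : ∀ s : Fin p → G, (0:ℝ) ≤ ((sift A₂ B₂ p s).card : ℝ) := fun s => by positivity
  -- weighted master identity
  have E : ∀ F : G → ℝ, ∑ x : G, dconv (mus A₁) (mus A₂) x ^ p * dconv (mus B₁) (mus B₂) x * F x
      = ((Fintype.card G : ℝ) / (A₁.card * A₂.card)) ^ p *
          ((Fintype.card G : ℝ) / (B₁.card * B₂.card)) *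
        ∑ s : Fin p → G, ∑ c ∈ sift A₁ B₁ p s, ∑ d ∈ sift A₂ B₂ p s, F (c - d) := by
    intro F
    calc ∑ x : G, dconv (mus A₁) (mus A₂) x ^ p * dconv (mus B₁) (mus B₂) x * F x
        = ∑ x : G, ((Fintype.card G : ℝ) / (A₁.card * A₂.card)) ^ p *
            ((Fintype.card G : ℝ) / (B₁.card * B₂.card)) *
            (((A₁.filter fun a => a - x ∈ A₂).card : ℝ) ^ p *
             ((B₁.filter fun c => c - x ∈ B₂).card : ℝ) * F x) := by
          refine Finset.sum_congr rfl fun x _ => ?_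
          rw [dconv_mus_eq A₁ A₂ x, dconv_mus_eq B₁ B₂ x, mul_pow]; ring
      _ = ((Fintype.card G : ℝ) / (A₁.card * A₂.card)) ^ p *
            ((Fintype.card G : ℝ) / (B₁.card * B₂.card)) *
          ∑ x : G, ((A₁.filter fun a => a - x ∈ A₂).card : ℝ) ^ p *
            ((B₁.filter fun c => c - x ∈ B₂).card : ℝ) * F x := by rw [Finset.mul_sum]
      _ = _ := by rw [master]
  have hcc1 : ∀ s : Fin p → G,
      (∑ c ∈ sift A₁ B₁ p s, ∑ d ∈ sift A₂ B₂ p s, (1:ℝ))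
        = ((sift A₁ B₁ p s).card : ℝ) * ((sift A₂ B₂ p s).card : ℝ) := by
    intro s
    rw [Finset.sum_const, Finset.sum_const, nsmul_eq_mul, nsmul_eq_mul, mul_one]
  have hE1 : ∑ x : G, dconv (mus A₁) (mus A₂) x ^ p * dconv (mus B₁) (mus B₂) x
      = ((Fintype.card G : ℝ) / (A₁.card * A₂.card)) ^ p *
        ((Fintype.card G : ℝ) / (B₁.card * B₂.card)) *
        ∑ s : Fin p → G, ((sift A₁ B₁ p s).card : ℝ) * ((sift A₂ B₂ p s).card : ℝ) := by
    have h := E (fun _ => (1:ℝ))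
    simp only [mul_one] at h
    rw [h]
    congr 1
    exact Finset.sum_congr rfl fun s _ => hcc1 s
  have hXW : L ^ p * (Fintype.card G : ℝ)
      = ((Fintype.card G : ℝ) / (A₁.card * A₂.card)) ^ p *
        ((Fintype.card G : ℝ) / (B₁.card * B₂.card)) *
        ∑ s : Fin p → G, ((sift A₁ B₁ p s).card : ℝ) * ((sift A₂ B₂ p s).card : ℝ) := by
    rw [hLpX, div_mul_cancel₀ _ hN.ne', hE1]
  have hW0 : (0:ℝ) ≤ ∑ s : Fin p → G, ((sift A₁ B₁ p s).card : ℝ) * ((sift A₂ B₂ p s).card : ℝ) :=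
    Finset.sum_nonneg fun s _ => mul_nonneg (hn₁0 s) (hn₂0 s)
  have hWpos : (0:ℝ) < ∑ s : Fin p → G, ((sift A₁ B₁ p s).card : ℝ) * ((sift A₂ B₂ p s).card : ℝ) := by
    rcases hW0.lt_or_eq with h | h
    · exact h
    · exfalso
      have h1 : L ^ p * (Fintype.card G : ℝ) = 0 := by rw [hXW, ← h, mul_zero]
      have h2 : (0:ℝ) < L ^ p * (Fintype.card G : ℝ) := by positivity
      linarith
  have hθ₁pos : (0:ℝ) < (1/4) * (((A₁.card : ℝ) / (Fintype.card G : ℝ)) * L) ^ p := by positivity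
  have hθ₂pos : (0:ℝ) < (1/4) * (((A₂.card : ℝ) / (Fintype.card G : ℝ)) * L) ^ p := by positivity
  -- bad mass bounds
  have hbad₁ : ∑ s ∈ Finset.univ.filter (fun s : Fin p → G =>
        ((sift A₁ B₁ p s).card : ℝ) < (1/4) * (((A₁.card : ℝ) / (Fintype.card G : ℝ)) * L) ^ p * B₁.card),
        ((sift A₁ B₁ p s).card : ℝ) * ((sift A₂ B₂ p s).card : ℝ)
      ≤ (1/4) * ∑ s : Fin p → G, ((sift A₁ B₁ p s).card : ℝ) * ((sift A₂ B₂ p s).card : ℝ) := by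
    set θB : ℝ := (1/4) * (((A₁.card : ℝ) / (Fintype.card G : ℝ)) * L) ^ p * B₁.card with hθB
    have step1 : ∑ s ∈ Finset.univ.filter (fun s : Fin p → G => ((sift A₁ B₁ p s).card : ℝ) < θB),
          ((sift A₁ B₁ p s).card : ℝ) * ((sift A₂ B₂ p s).card : ℝ)
        ≤ ∑ s ∈ Finset.univ.filter (fun s : Fin p → G => ((sift A₁ B₁ p s).card : ℝ) < θB),
           θB * ((sift A₂ B₂ p s).card : ℝ) :=
      Finset.sum_le_sum fun s hs =>
        mul_le_mul_of_nonneg_right (Finset.mem_filter.1 hs).2.le (hn₂0 s)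
    have step2 : ∑ s ∈ Finset.univ.filter (fun s : Fin p → G => ((sift A₁ B₁ p s).card : ℝ) < θB),
          θB * ((sift A₂ B₂ p s).card : ℝ)
        ≤ ∑ s : Fin p → G, θB * ((sift A₂ B₂ p s).card : ℝ) := by
      refine Finset.sum_le_sum_of_subset_of_nonneg (Finset.filter_subset _ _) fun s _ _ => ?_
      have h1 := hn₂0 s
      have h2 : (0:ℝ) ≤ θB := by rw [hθB]; positivity
      positivity
    have step3 : ∑ s : Fin p → G, θB * ((sift A₂ B₂ p s).card : ℝ)
        = θB * ((B₂.card : ℝ) * (A₂.card : ℝ) ^ p) := by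
      rw [← Finset.mul_sum, sum_card_sift]
    have step4 : θB * ((B₂.card : ℝ) * (A₂.card : ℝ) ^ p)
        = (1/4) * ∑ s : Fin p → G, ((sift A₁ B₁ p s).card : ℝ) * ((sift A₂ B₂ p s).card : ℝ) := by
      have h4 : ((Fintype.card G : ℝ) / (A₁.card * A₂.card)) ^ p *
            ((Fintype.card G : ℝ) / (B₁.card * B₂.card)) *
            ((1/4) * ∑ s : Fin p → G, ((sift A₁ B₁ p s).card : ℝ) * ((sift A₂ B₂ p s).card : ℝ))
          = ((Fintype.card G : ℝ) / (A₁.card * A₂.card)) ^ p *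
            ((Fintype.card G : ℝ) / (B₁.card * B₂.card)) *
            (θB * ((B₂.card : ℝ) * (A₂.card : ℝ) ^ p)) := by
        rw [show ((Fintype.card G : ℝ) / (A₁.card * A₂.card)) ^ p *
            ((Fintype.card G : ℝ) / (B₁.card * B₂.card)) *
            ((1/4) * ∑ s : Fin p → G, ((sift A₁ B₁ p s).card : ℝ) * ((sift A₂ B₂ p s).card : ℝ))
          = (1/4) * (((Fintype.card G : ℝ) / (A₁.card * A₂.card)) ^ p *
            ((Fintype.card G : ℝ) / (B₁.card * B₂.card)) *
            ∑ s : Fin p → G, ((sift A₁ B₁ p s).card : ℝ) * ((sift A₂ B₂ p s).card : ℝ)) by ring,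
          ← hXW, hθB]
        field_simp
        ring_nf; simp only [← mul_pow]; field_simp
      exact (mul_left_cancel₀ hccpos.ne' h4).symm
    linarith
  have hbad₂ : ∑ s ∈ Finset.univ.filter (fun s : Fin p → G =>
        ((sift A₂ B₂ p s).card : ℝ) < (1/4) * (((A₂.card : ℝ) / (Fintype.card G : ℝ)) * L) ^ p * B₂.card),
        ((sift A₁ B₁ p s).card : ℝ) * ((sift A₂ B₂ p s).card : ℝ)
      ≤ (1/4) * ∑ s : Fin p → G, ((sift A₁ B₁ p s).card : ℝ) * ((sift A₂ B₂ p s).card : ℝ) := by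
    set θB : ℝ := (1/4) * (((A₂.card : ℝ) / (Fintype.card G : ℝ)) * L) ^ p * B₂.card with hθB
    have step1 : ∑ s ∈ Finset.univ.filter (fun s : Fin p → G => ((sift A₂ B₂ p s).card : ℝ) < θB),
          ((sift A₁ B₁ p s).card : ℝ) * ((sift A₂ B₂ p s).card : ℝ)
        ≤ ∑ s ∈ Finset.univ.filter (fun s : Fin p → G => ((sift A₂ B₂ p s).card : ℝ) < θB),
           ((sift A₁ B₁ p s).card : ℝ) * θB :=
      Finset.sum_le_sum fun s hs =>
        mul_le_mul_of_nonneg_left (Finset.mem_filter.1 hs).2.le (hn₁0 s)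
    have step2 : ∑ s ∈ Finset.univ.filter (fun s : Fin p → G => ((sift A₂ B₂ p s).card : ℝ) < θB),
          ((sift A₁ B₁ p s).card : ℝ) * θB
        ≤ ∑ s : Fin p → G, ((sift A₁ B₁ p s).card : ℝ) * θB := by
      refine Finset.sum_le_sum_of_subset_of_nonneg (Finset.filter_subset _ _) fun s _ _ => ?_
      have h1 := hn₁0 s
      have h2 : (0:ℝ) ≤ θB := by rw [hθB]; positivity
      positivity
    have step3 : ∑ s : Fin p → G, ((sift A₁ B₁ p s).card : ℝ) * θB
        = (B₁.card : ℝ) * (A₁.card : ℝ) ^ p * θB := by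
      rw [← Finset.sum_mul, sum_card_sift]
    have step4 : (B₁.card : ℝ) * (A₁.card : ℝ) ^ p * θB
        = (1/4) * ∑ s : Fin p → G, ((sift A₁ B₁ p s).card : ℝ) * ((sift A₂ B₂ p s).card : ℝ) := by
      have h4 : ((Fintype.card G : ℝ) / (A₁.card * A₂.card)) ^ p *
            ((Fintype.card G : ℝ) / (B₁.card * B₂.card)) *
            ((1/4) * ∑ s : Fin p → G, ((sift A₁ B₁ p s).card : ℝ) * ((sift A₂ B₂ p s).card : ℝ))
          = ((Fintype.card G : ℝ) / (A₁.card * A₂.card)) ^ p *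
            ((Fintype.card G : ℝ) / (B₁.card * B₂.card)) *
            ((B₁.card : ℝ) * (A₁.card : ℝ) ^ p * θB) := by
        rw [show ((Fintype.card G : ℝ) / (A₁.card * A₂.card)) ^ p *
            ((Fintype.card G : ℝ) / (B₁.card * B₂.card)) *
            ((1/4) * ∑ s : Fin p → G, ((sift A₁ B₁ p s).card : ℝ) * ((sift A₂ B₂ p s).card : ℝ))
          = (1/4) * (((Fintype.card G : ℝ) / (A₁.card * A₂.card)) ^ p *
            ((Fintype.card G : ℝ) / (B₁.card * B₂.card)) *
            ∑ s : Fin p → G, ((sift A₁ B₁ p s).card : ℝ) * ((sift A₂ B₂ p s).card : ℝ)) by ring,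
          ← hXW, hθB]
        field_simp
        ring_nf; simp only [← mul_pow]; field_simp
      exact (mul_left_cancel₀ hccpos.ne' h4).symm
    linarith
  -- good set has at least half the mass
  have hgood_mass : (∑ s : Fin p → G, ((sift A₁ B₁ p s).card : ℝ) * ((sift A₂ B₂ p s).card : ℝ)) / 2
      ≤ ∑ s ∈ Finset.univ.filter (fun s : Fin p → G =>
          (1/4) * (((A₁.card : ℝ) / (Fintype.card G : ℝ)) * L) ^ p * B₁.card ≤ ((sift A₁ B₁ p s).card : ℝ) ∧
          (1/4) * (((A₂.card : ℝ) / (Fintype.card G : ℝ)) * L) ^ p * B₂.card ≤ ((sift A₂ B₂ p s).card : ℝ)),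
          ((sift A₁ B₁ p s).card : ℝ) * ((sift A₂ B₂ p s).card : ℝ) := by
    set g : (Fin p → G) → ℝ := fun s => ((sift A₁ B₁ p s).card : ℝ) * ((sift A₂ B₂ p s).card : ℝ)
      with hg
    set P : (Fin p → G) → Prop := fun s =>
      (1/4) * (((A₁.card : ℝ) / (Fintype.card G : ℝ)) * L) ^ p * B₁.card ≤ ((sift A₁ B₁ p s).card : ℝ)
      with hP
    set R : (Fin p → G) → Prop := fun s =>
      (1/4) * (((A₂.card : ℝ) / (Fintype.card G : ℝ)) * L) ^ p * B₂.card ≤ ((sift A₂ B₂ p s).card : ℝ)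
      with hR
    have hg0 : ∀ s, 0 ≤ g s := fun s => mul_nonneg (hn₁0 s) (hn₂0 s)
    have hsplit : ∑ s : Fin p → G, g s
        = ∑ s ∈ Finset.univ.filter (fun s => P s ∧ R s), g s
          + ∑ s ∈ (Finset.univ.filter (fun s => P s ∧ R s))ᶜ, g s :=
      (Finset.sum_add_sum_compl _ _).symm
    have hsubset : (Finset.univ.filter (fun s => P s ∧ R s))ᶜ
        ⊆ Finset.univ.filter (fun s => ¬ P s) ∪ Finset.univ.filter (fun s => ¬ R s) := by
      intro s hs
      simp only [Finset.mem_compl, Finset.mem_filter, Finset.mem_univ, true_and, not_and_or] at hs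
      simp only [Finset.mem_union, Finset.mem_filter, Finset.mem_univ, true_and]
      exact hs
    have hunion : ∑ s ∈ Finset.univ.filter (fun s => ¬ P s) ∪ Finset.univ.filter (fun s => ¬ R s), g s
        ≤ ∑ s ∈ Finset.univ.filter (fun s => ¬ P s), g s
          + ∑ s ∈ Finset.univ.filter (fun s => ¬ R s), g s := by
      rw [← Finset.sum_union_inter]
      have : (0:ℝ) ≤ ∑ s ∈ Finset.univ.filter (fun s => ¬ P s) ∩ Finset.univ.filter (fun s => ¬ R s), g s :=
        Finset.sum_nonneg fun s _ => hg0 s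
      linarith
    have hnotP : Finset.univ.filter (fun s => ¬ P s)
        = Finset.univ.filter (fun s : Fin p → G =>
            ((sift A₁ B₁ p s).card : ℝ) < (1/4) * (((A₁.card : ℝ) / (Fintype.card G : ℝ)) * L) ^ p * B₁.card) := by
      refine Finset.filter_congr fun s _ => ?_
      rw [hP]
      simp [not_le]
    have hnotR : Finset.univ.filter (fun s => ¬ R s)
        = Finset.univ.filter (fun s : Fin p → G =>
            ((sift A₂ B₂ p s).card : ℝ) < (1/4) * (((A₂.card : ℝ) / (Fintype.card G : ℝ)) * L) ^ p * B₂.card) := by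
      refine Finset.filter_congr fun s _ => ?_
      rw [hR]
      simp [not_le]
    have hcompl : ∑ s ∈ (Finset.univ.filter (fun s => P s ∧ R s))ᶜ, g s
        ≤ (1/4) * ∑ s : Fin p → G, g s + (1/4) * ∑ s : Fin p → G, g s := by
      calc ∑ s ∈ (Finset.univ.filter (fun s => P s ∧ R s))ᶜ, g s
          ≤ ∑ s ∈ Finset.univ.filter (fun s => ¬ P s) ∪ Finset.univ.filter (fun s => ¬ R s), g s :=
            Finset.sum_le_sum_of_subset_of_nonneg hsubset fun s _ _ => hg0 s
        _ ≤ ∑ s ∈ Finset.univ.filter (fun s => ¬ P s), g s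
            + ∑ s ∈ Finset.univ.filter (fun s => ¬ R s), g s := hunion
        _ ≤ _ := by rw [hnotP, hnotR]; exact add_le_add hbad₁ hbad₂
    linarith
  -- the Q quantities
  have hQ0 : ∀ s : Fin p → G, (0:ℝ)
      ≤ ∑ c ∈ sift A₁ B₁ p s, ∑ d ∈ sift A₂ B₂ p s, (1 - S.indicator 1 (c - d)) := by
    intro s
    refine Finset.sum_nonneg fun c _ => Finset.sum_nonneg fun d _ => ?_
    have := (hind01 (c - d)).2; linarith
  have hνsum : ∑ x : G, dconv (mus B₁) (mus B₂) x = (Fintype.card G : ℝ) := by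
    have h := dconv_mus_inner B₁ B₂ (fun _ => (1:ℝ))
    simp only [mul_one, Finset.sum_const, nsmul_eq_mul] at h
    rw [h]
    field_simp
  have heps : ((1-ε)) ^ p ≤ δ/2 := by
    have he : (1-ε) ≤ Real.exp (-ε) := by
      have := Real.add_one_le_exp (-ε); linarith
    have h2 : (1-ε) ^ p ≤ Real.exp (-ε) ^ p := pow_le_pow_left₀ (by linarith) he p
    have h3 : Real.exp (-ε) ^ p = Real.exp (-(ε * p)) := by
      rw [← Real.exp_nat_mul]; ring_nf
    have h4 : Real.exp (-(ε * p)) ≤ δ/2 := by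
      rw [show (δ/2 : ℝ) = Real.exp (Real.log (δ/2)) from (Real.exp_log (by positivity)).symm]
      apply Real.exp_le_exp.2
      have h5 : Real.log (2/δ) ≤ ε * p := by
        have h6 := mul_le_mul_of_nonneg_left hp hε0.le
        rw [← mul_assoc, mul_inv_cancel₀ hε0.ne', one_mul] at h6
        exact h6
      have h7 : Real.log (δ/2) = - Real.log (2/δ) := by
        rw [← Real.log_inv]; congr 1; rw [inv_div]
      linarith
    calc (1-ε) ^ p ≤ Real.exp (-(ε * p)) := h3 ▸ h2
      _ ≤ δ/2 := h4
  have hlevel : ∑ x : G, dconv (mus A₁) (mus A₂) x ^ p * dconv (mus B₁) (mus B₂) x *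
        (1 - S.indicator 1 x) ≤ (δ/2) * (L ^ p * (Fintype.card G : ℝ)) := by
    calc ∑ x : G, dconv (mus A₁) (mus A₂) x ^ p * dconv (mus B₁) (mus B₂) x * (1 - S.indicator 1 x)
        ≤ ∑ x : G, ((1-ε) * L) ^ p * dconv (mus B₁) (mus B₂) x := by
          refine Finset.sum_le_sum fun x _ => ?_
          by_cases hx : x ∈ S
          · rw [Set.indicator_of_mem hx]
            simp only [Pi.one_apply, sub_self, mul_zero]
            exact mul_nonneg (pow_nonneg (mul_nonneg (by linarith) hL0) p) (hν0 x)
          · rw [Set.indicator_of_notMem hx]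
            simp only [Pi.one_apply, sub_zero, mul_one]
            have hfx : dconv (mus A₁) (mus A₂) x < (1-ε) * L := by
              by_contra hcon
              push_neg at hcon
              exact hx (by rw [hS]; exact hcon)
            exact mul_le_mul_of_nonneg_right (pow_le_pow_left₀ (hf0 x) hfx.le p) (hν0 x)
      _ = ((1-ε) * L) ^ p * (Fintype.card G : ℝ) := by rw [← Finset.mul_sum, hνsum]
      _ ≤ (δ/2) * (L ^ p * (Fintype.card G : ℝ)) := by
          rw [mul_pow]
          have h1 := mul_le_mul_of_nonneg_right
            (mul_le_mul_of_nonneg_right heps (by positivity : (0:ℝ) ≤ L ^ p)) hN.le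
          calc (1-ε) ^ p * L ^ p * (Fintype.card G : ℝ)
              ≤ δ/2 * L ^ p * (Fintype.card G : ℝ) := h1
            _ = (δ/2) * (L ^ p * (Fintype.card G : ℝ)) := by ring
  have hQW : ∑ s : Fin p → G, (∑ c ∈ sift A₁ B₁ p s, ∑ d ∈ sift A₂ B₂ p s,
        (1 - S.indicator 1 (c - d)))
      ≤ (δ/2) * ∑ s : Fin p → G, ((sift A₁ B₁ p s).card : ℝ) * ((sift A₂ B₂ p s).card : ℝ) := by
    have hEQ := E (fun y => 1 - S.indicator 1 y)
    have hch : ((Fintype.card G : ℝ) / (A₁.card * A₂.card)) ^ p *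
          ((Fintype.card G : ℝ) / (B₁.card * B₂.card)) *
          ∑ s : Fin p → G, (∑ c ∈ sift A₁ B₁ p s, ∑ d ∈ sift A₂ B₂ p s, (1 - S.indicator 1 (c - d)))
        ≤ (δ/2) * (((Fintype.card G : ℝ) / (A₁.card * A₂.card)) ^ p *
          ((Fintype.card G : ℝ) / (B₁.card * B₂.card)) *
          ∑ s : Fin p → G, ((sift A₁ B₁ p s).card : ℝ) * ((sift A₂ B₂ p s).card : ℝ)) := by
      rw [← hEQ, ← hXW]
      exact hlevel
    have := (mul_le_mul_iff_right₀ hccpos).1 (by linarith : ((Fintype.card G : ℝ) / (A₁.card * A₂.card)) ^ p *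
      ((Fintype.card G : ℝ) / (B₁.card * B₂.card)) *
      ∑ s : Fin p → G, (∑ c ∈ sift A₁ B₁ p s, ∑ d ∈ sift A₂ B₂ p s, (1 - S.indicator 1 (c - d)))
      ≤ ((Fintype.card G : ℝ) / (A₁.card * A₂.card)) ^ p *
      ((Fintype.card G : ℝ) / (B₁.card * B₂.card)) *
      ((δ/2) * ∑ s : Fin p → G, ((sift A₁ B₁ p s).card : ℝ) * ((sift A₂ B₂ p s).card : ℝ)))
    exact this
  -- select a good s
  have hsel : ∃ s : Fin p → G,
      ((1/4) * (((A₁.card : ℝ) / (Fintype.card G : ℝ)) * L) ^ p * B₁.card ≤ ((sift A₁ B₁ p s).card : ℝ) ∧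
       (1/4) * (((A₂.card : ℝ) / (Fintype.card G : ℝ)) * L) ^ p * B₂.card ≤ ((sift A₂ B₂ p s).card : ℝ)) ∧
      (∑ c ∈ sift A₁ B₁ p s, ∑ d ∈ sift A₂ B₂ p s, (1 - S.indicator 1 (c - d)))
        ≤ δ * (((sift A₁ B₁ p s).card : ℝ) * ((sift A₂ B₂ p s).card : ℝ)) := by
    by_contra hcon
    push_neg at hcon
    set good := Finset.univ.filter (fun s : Fin p → G =>
        (1/4) * (((A₁.card : ℝ) / (Fintype.card G : ℝ)) * L) ^ p * B₁.card ≤ ((sift A₁ B₁ p s).card : ℝ) ∧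
        (1/4) * (((A₂.card : ℝ) / (Fintype.card G : ℝ)) * L) ^ p * B₂.card ≤ ((sift A₂ B₂ p s).card : ℝ))
      with hgood
    have hgood_nonempty : good.Nonempty := by
      by_contra h
      rw [Finset.not_nonempty_iff_eq_empty] at h
      rw [h] at hgood_mass
      · simp only [Finset.sum_empty] at hgood_mass
        linarith
    have hstrict : ∑ s ∈ good, δ * (((sift A₁ B₁ p s).card : ℝ) * ((sift A₂ B₂ p s).card : ℝ))
        < ∑ s ∈ good, (∑ c ∈ sift A₁ B₁ p s, ∑ d ∈ sift A₂ B₂ p s, (1 - S.indicator 1 (c - d))) := by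
      refine Finset.sum_lt_sum_of_nonempty hgood_nonempty fun s hs => ?_
      rw [hgood] at hs
      have hmem := (Finset.mem_filter.1 hs).2
      exact hcon s hmem
    have h1 : δ * ((∑ s : Fin p → G, ((sift A₁ B₁ p s).card : ℝ) * ((sift A₂ B₂ p s).card : ℝ)) / 2)
        ≤ ∑ s ∈ good, δ * (((sift A₁ B₁ p s).card : ℝ) * ((sift A₂ B₂ p s).card : ℝ)) := by
      rw [← Finset.mul_sum]
      exact mul_le_mul_of_nonneg_left hgood_mass hδ0.le
    have h2 : ∑ s ∈ good, (∑ c ∈ sift A₁ B₁ p s, ∑ d ∈ sift A₂ B₂ p s, (1 - S.indicator (1 : G → ℝ) (c - d)))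
        ≤ ∑ s : Fin p → G, (∑ c ∈ sift A₁ B₁ p s, ∑ d ∈ sift A₂ B₂ p s, (1 - S.indicator (1 : G → ℝ) (c - d))) :=
      Finset.sum_le_sum_of_subset_of_nonneg (Finset.subset_univ good) fun s _ _ => hQ0 s
    linarith
  obtain ⟨s, ⟨hs1, hs2⟩, hsQ⟩ := hsel
  have hn₁pos : (0:ℝ) < ((sift A₁ B₁ p s).card : ℝ) := lt_of_lt_of_le (by positivity) hs1
  have hn₂pos : (0:ℝ) < ((sift A₂ B₂ p s).card : ℝ) := lt_of_lt_of_le (by positivity) hs2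
  refine ⟨sift A₁ B₁ p s, sift A₂ B₂ p s, Finset.filter_subset _ _, Finset.filter_subset _ _,
    ?_, ?_, ?_⟩
  · rw [le_div_iff₀ hB₁c]; exact hs1
  · rw [le_div_iff₀ hB₂c]; exact hs2
  · rw [dconv_mus_inner]
    have hQs : (∑ c ∈ sift A₁ B₁ p s, ∑ d ∈ sift A₂ B₂ p s, (1 - S.indicator 1 (c - d)))
        = ((sift A₁ B₁ p s).card : ℝ) * ((sift A₂ B₂ p s).card : ℝ)
          - ∑ c ∈ sift A₁ B₁ p s, ∑ d ∈ sift A₂ B₂ p s, S.indicator 1 (c - d) := by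
      rw [← hcc1 s]
      rw [← Finset.sum_sub_distrib]
      refine Finset.sum_congr rfl fun c _ => ?_
      rw [← Finset.sum_sub_distrib]
    have hIlow : (1 - δ) * (((sift A₁ B₁ p s).card : ℝ) * ((sift A₂ B₂ p s).card : ℝ))
        ≤ ∑ c ∈ sift A₁ B₁ p s, ∑ d ∈ sift A₂ B₂ p s, S.indicator 1 (c - d) := by
      linarith [hsQ, hQs.ge, hQs.le]
    have hrw : ((Fintype.card G : ℝ) / (((sift A₁ B₁ p s).card : ℝ) * ((sift A₂ B₂ p s).card : ℝ)) *
          ∑ c ∈ sift A₁ B₁ p s, ∑ d ∈ sift A₂ B₂ p s, S.indicator 1 (c - d)) / (Fintype.card G : ℝ)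
        = (∑ c ∈ sift A₁ B₁ p s, ∑ d ∈ sift A₂ B₂ p s, S.indicator 1 (c - d))
          / (((sift A₁ B₁ p s).card : ℝ) * ((sift A₂ B₂ p s).card : ℝ)) := by
      rw [div_mul_eq_mul_div, div_div,
        mul_comm ((Fintype.card G : ℝ)) (∑ c ∈ sift A₁ B₁ p s, ∑ d ∈ sift A₂ B₂ p s, S.indicator 1 (c - d)),
        mul_div_mul_right _ _ hN.ne']
    rw [hrw, le_div_iff₀ (by positivity)]
    linarith [hIlow]
end

section
/- Let G be a finite abelian group, and let F : G → ℂ be of the form F = (μ_{A₁'} ∘ μ_{A₂'}) ∘ (μ_{A₁} ∘ μ_{A₂}) for nonempty sets A₁', A₂', A₁, A₂ ⊆ G where A₁, A₂ ⊆ B with B nonempty of relative densities α₁, α₂. Then Σ_{γ ∈ Ĝ} |F̂(γ)| ≤ (α₁α₂)^{−1/2}·μ(B)^{−1}, where F̂(γ) = E_{x∈G} F(x)·conj(γ(x)) and the sum runs over all characters of G. -/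
/-- Normalized indicator `μ_S`, complex-valued. -/
noncomputable def musC {G : Type*} [Fintype G] [DecidableEq G] (S : Finset G) : G → ℂ :=
  fun y => if y ∈ S then (Fintype.card G : ℂ) / S.card else 0

/-- Normalized difference convolution `(f ∘ g)(x) = E_y f(y)·conj(g(y−x))`. -/
noncomputable def dconvC {G : Type*} [AddCommGroup G] [Fintype G] (f g : G → ℂ) : G → ℂ :=
  fun x => (∑ y : G, f y * (starRingEnd ℂ) (g (y - x))) / Fintype.card G

/-- Fourier coefficient `F̂(γ) = E_x F(x)·conj(γ(x))`. -/
noncomputable def fhat {G : Type*} [AddCommGroup G] [Fintype G] (F : G → ℂ)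
    (γ : AddChar G ℂ) : ℂ :=
  (∑ x : G, F x * (starRingEnd ℂ) (γ x)) / Fintype.card G

section Aux

open Finset Complex

variable {G : Type*} [AddCommGroup G] [Fintype G]

/-- Multiplicativity of the Fourier transform under difference convolution. -/
lemma fhat_dconvC (f g : G → ℂ) (γ : AddChar G ℂ) :
    fhat (dconvC f g) γ = fhat f γ * (starRingEnd ℂ) (fhat g γ) := by
  unfold fhat dconvC
  have key : ∀ y : G, ∑ x : G, f y * (starRingEnd ℂ) (g (y - x)) * (starRingEnd ℂ) (γ x)
      = f y * (starRingEnd ℂ) (γ y) * ∑ z : G, (starRingEnd ℂ) (g z) * γ z := by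
    intro y
    rw [Finset.mul_sum]
    refine Fintype.sum_equiv (Equiv.subLeft y) _ _ (fun z => ?_)
    have h1 : γ (y - z) = γ y * (starRingEnd ℂ) (γ z) := by
      rw [sub_eq_add_neg, AddChar.map_add_eq_mul, AddChar.map_neg_eq_conj]
    have h2 : (starRingEnd ℂ) (γ y) * γ y = 1 := by
      rw [← AddChar.inv_apply_eq_conj]
      have hne : γ y ≠ 0 := by
        intro h
        have := γ.norm_apply y
        rw [h] at this
        simp at this
      exact inv_mul_cancel₀ hne
    simp only [Equiv.subLeft_apply, sub_sub_cancel, h1, map_mul, Complex.conj_conj]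
    have h3 : f y * (starRingEnd ℂ) (γ y) *
          ((starRingEnd ℂ) (g (y - z)) * (γ y * (starRingEnd ℂ) (γ z)))
        = f y * (starRingEnd ℂ) (g (y - z)) * (starRingEnd ℂ) (γ z) *
          ((starRingEnd ℂ) (γ y) * γ y) := by ring
    rw [h3, h2, mul_one]
  have hconj : (starRingEnd ℂ) (∑ x : G, g x * (starRingEnd ℂ) (γ x))
      = ∑ z : G, (starRingEnd ℂ) (g z) * γ z := by
    rw [map_sum]; exact Finset.sum_congr rfl fun z _ => by
      rw [map_mul, Complex.conj_conj]
  rw [map_div₀, Complex.conj_natCast, div_mul_div_comm, hconj]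
  have expand : ∑ x : G, (∑ y : G, f y * (starRingEnd ℂ) (g (y - x))) / (Fintype.card G : ℂ) *
        (starRingEnd ℂ) (γ x)
      = ((∑ y : G, f y * (starRingEnd ℂ) (γ y)) * ∑ z : G, (starRingEnd ℂ) (g z) * γ z) /
        (Fintype.card G : ℂ) := by
    calc ∑ x : G, (∑ y : G, f y * (starRingEnd ℂ) (g (y - x))) / (Fintype.card G : ℂ) *
          (starRingEnd ℂ) (γ x)
        = (∑ x : G, ∑ y : G, f y * (starRingEnd ℂ) (g (y - x)) * (starRingEnd ℂ) (γ x)) /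
          (Fintype.card G : ℂ) := by
          rw [Finset.sum_div]
          exact Finset.sum_congr rfl fun x _ => by
            rw [div_mul_eq_mul_div, Finset.sum_mul]
      _ = (∑ y : G, ∑ x : G, f y * (starRingEnd ℂ) (g (y - x)) * (starRingEnd ℂ) (γ x)) /
          (Fintype.card G : ℂ) := by rw [Finset.sum_comm]
      _ = (∑ y : G, f y * (starRingEnd ℂ) (γ y) * ∑ z : G, (starRingEnd ℂ) (g z) * γ z) /
          (Fintype.card G : ℂ) := by
          rw [Finset.sum_congr rfl fun y _ => key y]
      _ = _ := by rw [← Finset.sum_mul]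
  rw [expand, div_div]

lemma abs_fhat_musC_le [DecidableEq G] (S : Finset G) (γ : AddChar G ℂ) :
    ‖fhat (musC S) γ‖ ≤ 1 := by
  have hN : (0 : ℝ) < (Fintype.card G : ℝ) := by positivity
  rcases S.eq_empty_or_nonempty with rfl | hS
  · simp [fhat, musC]
  have hSc : (0 : ℝ) < (S.card : ℝ) := by positivity
  unfold fhat
  rw [norm_div, Complex.norm_natCast]
  rw [div_le_one hN]
  calc ‖∑ x : G, musC S x * (starRingEnd ℂ) (γ x)‖
      ≤ ∑ x : G, ‖musC S x * (starRingEnd ℂ) (γ x)‖ :=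
        norm_sum_le _ _
    _ = ∑ x : G, (if x ∈ S then (Fintype.card G : ℝ) / S.card else 0) := by
        refine Finset.sum_congr rfl fun x _ => ?_
        have hγ : ‖γ x‖ = 1 := by
          exact γ.norm_apply x
        rw [norm_mul, Complex.norm_conj, hγ, mul_one, musC]
        split_ifs with h
        · rw [norm_div, Complex.norm_natCast, Complex.norm_natCast]
        · simp
    _ = (Fintype.card G : ℝ) := by
        rw [Finset.sum_ite_mem, Finset.univ_inter, Finset.sum_const, nsmul_eq_mul]
        field_simp

lemma sum_fhat_mul_conj [DecidableEq G] [inst : Fintype (AddChar G ℂ)] (f : G → ℂ) :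
    ∑ γ : AddChar G ℂ, fhat f γ * (starRingEnd ℂ) (fhat f γ)
      = (∑ x : G, f x * (starRingEnd ℂ) (f x)) / (Fintype.card G : ℂ) := by
  obtain rfl : inst = AddChar.instFintype G ℂ := Subsingleton.elim _ _
  have hN : (Fintype.card G : ℂ) ≠ 0 := Nat.cast_ne_zero.2 Fintype.card_ne_zero
  unfold fhat
  have step : ∀ γ : AddChar G ℂ,
      (∑ x : G, f x * (starRingEnd ℂ) (γ x)) / (Fintype.card G : ℂ) *
        (starRingEnd ℂ) ((∑ x : G, f x * (starRingEnd ℂ) (γ x)) / (Fintype.card G : ℂ))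
      = (∑ x : G, ∑ y : G, f x * (starRingEnd ℂ) (f y) * ((starRingEnd ℂ) (γ x) * γ y)) /
          ((Fintype.card G : ℂ) * (Fintype.card G : ℂ)) := by
    intro γ
    rw [map_div₀, Complex.conj_natCast, div_mul_div_comm, map_sum, Finset.sum_mul_sum]
    congr 1
    refine Finset.sum_congr rfl fun x _ => Finset.sum_congr rfl fun y _ => ?_
    rw [map_mul, Complex.conj_conj]
    ring
  simp only [step]
  rw [← Finset.sum_div, Finset.sum_comm]
  have inner : ∀ x : G, ∑ γ : AddChar G ℂ,
      ∑ y : G, f x * (starRingEnd ℂ) (f y) * ((starRingEnd ℂ) (γ x) * γ y)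
      = f x * (starRingEnd ℂ) (f x) * (Fintype.card G : ℂ) := by
    intro x
    rw [Finset.sum_comm]
    have hy : ∀ y : G, ∑ γ : AddChar G ℂ, f x * (starRingEnd ℂ) (f y) *
        ((starRingEnd ℂ) (γ x) * γ y)
        = f x * (starRingEnd ℂ) (f y) * (if y - x = 0 then (Fintype.card G : ℂ) else 0) := by
      intro y
      rw [← Finset.mul_sum]
      congr 1
      rw [← AddChar.sum_apply_eq_ite]
      refine Finset.sum_congr rfl fun γ _ => ?_
      rw [← AddChar.map_neg_eq_conj, ← AddChar.map_add_eq_mul]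
      congr 1
      abel
    simp only [hy, sub_eq_zero, mul_ite, mul_zero]
    rw [Finset.sum_ite_eq' Finset.univ x (fun y => f x * (starRingEnd ℂ) (f y) *
      (Fintype.card G : ℂ))]
    simp
  simp only [inner]
  rw [← Finset.sum_mul]
  have hdiv : ((Fintype.card G : ℂ)) / ((Fintype.card G : ℂ) * (Fintype.card G : ℂ))
      = ((Fintype.card G : ℂ))⁻¹ := by field_simp
  rw [mul_div_assoc, hdiv, div_eq_mul_inv]

lemma parseval_musC [DecidableEq G] [inst : Fintype (AddChar G ℂ)] (S : Finset G)
    (hS : S.Nonempty) :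
    ∑ γ : AddChar G ℂ, ‖fhat (musC S) γ‖ ^ 2
      = (Fintype.card G : ℝ) / S.card := by
  have hN : (0 : ℝ) < (Fintype.card G : ℝ) := by positivity
  have hSc : (0 : ℝ) < (S.card : ℝ) := by positivity
  have hx : ∑ x : G, musC S x * (starRingEnd ℂ) (musC S x)
      = ((Fintype.card G : ℂ) * (Fintype.card G : ℂ)) / S.card := by
    have hterm : ∀ x : G, musC S x * (starRingEnd ℂ) (musC S x)
        = if x ∈ S then ((Fintype.card G : ℂ) / S.card) * ((Fintype.card G : ℂ) / S.card)
          else 0 := by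
      intro x
      unfold musC
      split_ifs with h
      · rw [map_div₀, Complex.conj_natCast, Complex.conj_natCast]
      · simp
    rw [Finset.sum_congr rfl fun x _ => hterm x, Finset.sum_ite_mem, Finset.univ_inter,
      Finset.sum_const, nsmul_eq_mul]
    have hScc : (S.card : ℂ) ≠ 0 := Nat.cast_ne_zero.2 hS.card_pos.ne'
    field_simp
  have key := sum_fhat_mul_conj (G := G) (musC S)
  rw [hx] at key
  have habs : ∀ γ : AddChar G ℂ, fhat (musC S) γ * (starRingEnd ℂ) (fhat (musC S) γ)
      = ((‖fhat (musC S) γ‖ : ℂ)) ^ 2 := by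
    intro γ
    rw [Complex.mul_conj]
    rw [← Complex.sq_norm]
    push_cast
    ring
  rw [Finset.sum_congr rfl fun γ _ => habs γ] at key
  have hNc : (Fintype.card G : ℂ) ≠ 0 := Nat.cast_ne_zero.2 Fintype.card_ne_zero
  have key2 : ((∑ γ : AddChar G ℂ, ‖fhat (musC S) γ‖ ^ 2 : ℝ) : ℂ)
      = (((Fintype.card G : ℝ) / S.card : ℝ) : ℂ) := by
    push_cast
    rw [key]
    field_simp
  exact_mod_cast key2

end Aux

/-- `ℓ¹` bound on the Fourier transform of
`F = (μ_{A₁'} ∘ μ_{A₂'}) ∘ (μ_{A₁} ∘ μ_{A₂})`: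
`Σ_γ |F̂(γ)| ≤ (α₁α₂)^{−1/2}·μ(B)⁻¹`. -/
theorem fourier_l1_bound {G : Type*} [AddCommGroup G] [Fintype G] [DecidableEq G]
    [Fintype (AddChar G ℂ)]
    (B A₁ A₂ A₁' A₂' : Finset G) (hB : B.Nonempty)
    (h1 : A₁ ⊆ B) (h2 : A₂ ⊆ B)
    (h1n : A₁.Nonempty) (h2n : A₂.Nonempty) (h1n' : A₁'.Nonempty) (h2n' : A₂'.Nonempty) :
    ∑ γ : AddChar G ℂ,
        ‖fhat (dconvC (dconvC (musC A₁') (musC A₂'))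
          (dconvC (musC A₁) (musC A₂))) γ‖
      ≤ (((A₁.card : ℝ) / B.card) * ((A₂.card : ℝ) / B.card)) ^ (-(1 / 2 : ℝ)) *
          ((B.card : ℝ) / Fintype.card G)⁻¹ := by
  have hN : (0 : ℝ) < (Fintype.card G : ℝ) := by positivity
  have ha1 : (0 : ℝ) < (A₁.card : ℝ) := by exact_mod_cast Finset.card_pos.2 h1n
  have ha2 : (0 : ℝ) < (A₂.card : ℝ) := by exact_mod_cast Finset.card_pos.2 h2n
  have hb : (0 : ℝ) < (B.card : ℝ) := by exact_mod_cast Finset.card_pos.2 hB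
  have hpt : ∀ γ : AddChar G ℂ,
      ‖fhat (dconvC (dconvC (musC A₁') (musC A₂'))
          (dconvC (musC A₁) (musC A₂))) γ‖
      ≤ ‖fhat (musC A₁) γ‖ * ‖fhat (musC A₂) γ‖ := by
    intro γ
    rw [fhat_dconvC, fhat_dconvC, fhat_dconvC]
    simp only [map_mul, norm_mul]
    simp only [Complex.norm_conj]
    calc ‖fhat (musC A₁') γ‖ * ‖fhat (musC A₂') γ‖ *
          (‖fhat (musC A₁) γ‖ * ‖fhat (musC A₂) γ‖)
        ≤ 1 * 1 * (‖fhat (musC A₁) γ‖ * ‖fhat (musC A₂) γ‖) := by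
          gcongr
          · exact abs_fhat_musC_le A₁' γ
          · exact abs_fhat_musC_le A₂' γ
      _ = ‖fhat (musC A₁) γ‖ * ‖fhat (musC A₂) γ‖ := by ring
  have hCS : ∑ γ : AddChar G ℂ,
        ‖fhat (musC A₁) γ‖ * ‖fhat (musC A₂) γ‖
      ≤ Real.sqrt ((Fintype.card G : ℝ) / A₁.card) *
        Real.sqrt ((Fintype.card G : ℝ) / A₂.card) := by
    have := Real.sum_mul_le_sqrt_mul_sqrt Finset.univ
      (fun γ : AddChar G ℂ => ‖fhat (musC A₁) γ‖)
      (fun γ : AddChar G ℂ => ‖fhat (musC A₂) γ‖)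
    rwa [parseval_musC A₁ h1n, parseval_musC A₂ h2n] at this
  refine le_trans (Finset.sum_le_sum fun γ _ => hpt γ) (le_trans hCS (le_of_eq ?_))
  rw [← Real.sqrt_mul (by positivity), div_mul_div_comm,
    Real.sqrt_div (by positivity) _, Real.sqrt_mul_self hN.le]
  rw [Real.rpow_neg (by positivity), ← Real.sqrt_eq_rpow, div_mul_div_comm,
    Real.sqrt_div (by positivity) _, Real.sqrt_mul_self hb.le]
  rw [inv_div, inv_div, div_mul_div_comm,
    mul_comm ((B.card : ℝ)) ((Fintype.card G : ℝ)), mul_div_mul_right _ _ hb.ne']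
end

section
/- Let G be a finite abelian group, Γ ⊆ Ĝ nonempty of size d, and ρ ∈ [0,2]. Then the Bohr set B = Bohr(Γ;ρ) = {x ∈ G : |γ(x)−1| ≤ ρ for all γ ∈ Γ} satisfies |B| ≥ (ρ/8)^d·|G|. -/
/-- The Bohr set `Bohr(Γ;ρ) = {x ∈ G : |γ(x)−1| ≤ ρ for all γ ∈ Γ}`. -/
def bohr {G : Type*} [AddCommGroup G] (Γ : Finset (AddChar G ℂ)) (ρ : ℝ) : Set G :=
  {x : G | ∀ γ ∈ Γ, ‖γ x - 1‖ ≤ ρ}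

lemma chord_aux (θ : ℝ) : ‖Complex.exp (θ * Complex.I) - 1‖ ≤ |θ| := by
  have he : Complex.exp (θ * Complex.I) - 1
      = Complex.ofReal (Real.cos θ - 1) + Complex.ofReal (Real.sin θ) * Complex.I := by
    rw [Complex.exp_mul_I, ← Complex.ofReal_cos, ← Complex.ofReal_sin]
    push_cast; ring
  have h1 : ‖Complex.exp (θ * Complex.I) - 1‖ ^ 2 = 2 - 2 * Real.cos θ := by
    rw [he, Complex.sq_norm, Complex.normSq_add_mul_I]
    nlinarith [Real.sin_sq_add_cos_sq θ]
  have h2 := Real.one_sub_sq_div_two_le_cos (x := θ)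
  nlinarith [norm_nonneg (Complex.exp (θ * Complex.I) - 1), abs_nonneg θ, _root_.sq_abs θ]

lemma chord (a b : ℝ) :
    ‖Complex.exp (a * Complex.I) - Complex.exp (b * Complex.I)‖ ≤ |a - b| := by
  have h : Complex.exp (a * Complex.I) - Complex.exp (b * Complex.I)
      = Complex.exp (b * Complex.I) * (Complex.exp ((a - b : ℝ) * Complex.I) - 1) := by
    rw [mul_sub, ← Complex.exp_add, mul_one]
    push_cast; ring_nf
  rw [h, norm_mul, Complex.norm_exp_ofReal_mul_I, one_mul]
  exact chord_aux _

/-- The bucket (arc index) of a complex number, among `N` arcs of the circle. -/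
noncomputable def bucket (N : ℕ) (hN : 0 < N) (z : ℂ) : Fin N :=
  ⟨(⌈(N : ℝ) * (Complex.arg z + Real.pi) / (2 * Real.pi)⌉ - 1).toNat, by
    have hπ := Real.pi_pos
    have h1 : Complex.arg z + Real.pi ≤ 2 * Real.pi := by
      have := Complex.arg_le_pi z; linarith
    have h0 : 0 < Complex.arg z + Real.pi := by
      have := Complex.neg_pi_lt_arg z; linarith
    have hNR : (0 : ℝ) < N := by exact_mod_cast hN
    have ht0 : 0 < (N : ℝ) * (Complex.arg z + Real.pi) / (2 * Real.pi) := by positivity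
    have htN : (N : ℝ) * (Complex.arg z + Real.pi) / (2 * Real.pi) ≤ N := by
      rw [div_le_iff₀ (by positivity)]
      nlinarith
    have hc1 : 1 ≤ ⌈(N : ℝ) * (Complex.arg z + Real.pi) / (2 * Real.pi)⌉ := Int.ceil_pos.mpr ht0
    have hcN : ⌈(N : ℝ) * (Complex.arg z + Real.pi) / (2 * Real.pi)⌉ ≤ (N : ℤ) :=
      Int.ceil_le.mpr (by exact_mod_cast htN)
    omega⟩

lemma bucket_eq_imp {N : ℕ} (hN : 0 < N) {z w : ℂ} (h : bucket N hN z = bucket N hN w) :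
    |Complex.arg z - Complex.arg w| ≤ 2 * Real.pi / N := by
  have hπ := Real.pi_pos
  have hNR : (0 : ℝ) < N := by exact_mod_cast hN
  set tz : ℝ := (N : ℝ) * (Complex.arg z + Real.pi) / (2 * Real.pi) with htz
  set tw : ℝ := (N : ℝ) * (Complex.arg w + Real.pi) / (2 * Real.pi) with htw
  have hz0 : 0 < tz := by
    have := Complex.neg_pi_lt_arg z
    rw [htz, div_pos_iff]
    left; constructor <;> nlinarith
  have hw0 : 0 < tw := by
    have := Complex.neg_pi_lt_arg w
    rw [htw, div_pos_iff]
    left; constructor <;> nlinarith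
  have hceil : ⌈tz⌉ = ⌈tw⌉ := by
    have h1 : 1 ≤ ⌈tz⌉ := Int.ceil_pos.mpr hz0
    have h2 : 1 ≤ ⌈tw⌉ := Int.ceil_pos.mpr hw0
    have h3 : (⌈tz⌉ - 1).toNat = (⌈tw⌉ - 1).toNat := congrArg Fin.val h
    omega
  have hle1 : tz ≤ (⌈tz⌉ : ℝ) := Int.le_ceil tz
  have hle2 : tw ≤ (⌈tw⌉ : ℝ) := Int.le_ceil tw
  have hlt1 : (⌈tz⌉ : ℝ) < tz + 1 := Int.ceil_lt_add_one tz
  have hlt2 : (⌈tw⌉ : ℝ) < tw + 1 := Int.ceil_lt_add_one tw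
  rw [hceil] at hle1 hlt1
  have hdiff : |tz - tw| ≤ 1 := by
    rw [abs_le]; constructor <;> linarith
  have hrel : tz - tw = (N : ℝ) * (Complex.arg z - Complex.arg w) / (2 * Real.pi) := by
    rw [htz, htw]; field_simp; ring
  rw [abs_le]; rw [hrel, abs_le] at hdiff
  obtain ⟨hd1, hd2⟩ := hdiff
  rw [div_le_iff₀ (by positivity)] at hd2
  rw [le_div_iff₀ (by positivity)] at hd1
  constructor
  · rw [neg_le, le_div_iff₀ hNR]; nlinarith
  · rw [le_div_iff₀ hNR]; nlinarith

/-- Size of Bohr sets: a Bohr set of rank `d` and width `ρ ∈ [0,2]` has size at least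
`(ρ/8)^d·|G|`. -/
theorem bohr_size {G : Type*} [AddCommGroup G] [Fintype G]
    (Γ : Finset (AddChar G ℂ)) (hΓ : Γ.Nonempty) (d : ℕ) (hd : Γ.card = d)
    (ρ : ℝ) (hρ0 : 0 ≤ ρ) (hρ2 : ρ ≤ 2) :
    (ρ / 8) ^ d * (Fintype.card G : ℝ) ≤ (Nat.card (bohr Γ ρ) : ℝ) := by
  classical
  have hπ := Real.pi_pos
  rcases eq_or_lt_of_le hρ0 with hρ | hρ
  · have hd1 : 0 < d := hd ▸ Finset.card_pos.mpr hΓ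
    rw [← hρ]
    simp [zero_pow hd1.ne']
  set N : ℕ := ⌈2 * Real.pi / ρ⌉₊ with hNdef
  have hNpos : 0 < N := Nat.ceil_pos.mpr (by positivity)
  have hNR : (0 : ℝ) < N := by exact_mod_cast hNpos
  have hN1 : 2 * Real.pi ≤ N * ρ := by
    have h := Nat.le_ceil (2 * Real.pi / ρ)
    rw [div_le_iff₀ hρ] at h
    exact h
  have hN8 : (N : ℝ) * ρ ≤ 8 := by
    rcases le_or_gt ρ (Real.pi / 2) with h | h
    · have hlt : (N : ℝ) < 2 * Real.pi / ρ + 1 := Nat.ceil_lt_add_one (by positivity)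
      rw [div_add' _ _ _ hρ.ne', lt_div_iff₀ hρ] at hlt
      nlinarith [Real.pi_lt_d2]
    · have h4 : 2 * Real.pi / ρ ≤ 4 := by
        rw [div_le_iff₀ hρ]; nlinarith [Real.pi_lt_d2]
      have : N ≤ 4 := Nat.ceil_le.mpr (by exact_mod_cast h4)
      have : (N : ℝ) ≤ 4 := by exact_mod_cast this
      nlinarith
  -- the bucketing function
  set f : G → (↥Γ → Fin N) := fun x γ => bucket N hNpos (γ.1 x) with hf
  have hG : 0 < Fintype.card G := Fintype.card_pos
  -- pigeonhole
  obtain ⟨y, hy⟩ : ∃ y : ↥Γ → Fin N,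
      (Fintype.card G : ℝ) / N ^ d ≤ (Finset.univ.filter (fun x => f x = y)).card := by
    by_contra hcon
    push_neg at hcon
    have hsum : ∑ y : ↥Γ → Fin N, ((Finset.univ.filter (fun x => f x = y)).card : ℝ)
        = (Fintype.card G : ℝ) := by
      rw [← Nat.cast_sum]
      congr 1
      rw [← Finset.card_univ (α := G)]
      exact (Finset.card_eq_sum_card_fiberwise (fun x _ => Finset.mem_univ (f x))).symm
    have hcardβ : Fintype.card (↥Γ → Fin N) = N ^ d := by
      rw [Fintype.card_fun, Fintype.card_fin, Fintype.card_coe, hd]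
    haveI : Nonempty (Fin N) := ⟨⟨0, hNpos⟩⟩
    have hlt : ∑ y : ↥Γ → Fin N, ((Finset.univ.filter (fun x => f x = y)).card : ℝ)
        < ∑ _y : ↥Γ → Fin N, (Fintype.card G : ℝ) / N ^ d :=
      Finset.sum_lt_sum_of_nonempty Finset.univ_nonempty (fun y _ => hcon y)
    rw [hsum, Finset.sum_const, Finset.card_univ, hcardβ, nsmul_eq_mul] at hlt
    have hNd : (0 : ℝ) < (N : ℝ) ^ d := by positivity
    push_cast at hlt
    rw [mul_comm, div_mul_cancel₀ _ (ne_of_gt hNd)] at hlt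
    exact lt_irrefl _ hlt
  set T := Finset.univ.filter (fun x => f x = y) with hT
  have hTpos : (0 : ℝ) < T.card := lt_of_lt_of_le (by positivity) hy
  have hTne : T.Nonempty := Finset.card_pos.mp (by exact_mod_cast hTpos)
  obtain ⟨x₀, hx₀⟩ := hTne
  have hmem : ∀ x ∈ T, x - x₀ ∈ bohr Γ ρ := by
    intro x hx γ hγ
    have hfx : f x = y := (Finset.mem_filter.mp hx).2
    have hfx₀ : f x₀ = y := (Finset.mem_filter.mp hx₀).2
    have hb : bucket N hNpos (γ x) = bucket N hNpos (γ x₀) := by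
      have := congrFun (hfx.trans hfx₀.symm) ⟨γ, hγ⟩
      exact this
    have harg := bucket_eq_imp hNpos hb
    have hz : ‖γ x‖ = 1 := γ.norm_apply x
    have hz₀ : ‖γ x₀‖ = 1 := γ.norm_apply x₀
    have hne₀ : γ x₀ ≠ 0 := by
      intro h; rw [h] at hz₀; simp at hz₀
    have hex : Complex.exp ((Complex.arg (γ x) : ℝ) * Complex.I) = γ x := by
      have := Complex.norm_mul_exp_arg_mul_I (γ x)
      rwa [hz, Complex.ofReal_one, one_mul] at this
    have hex₀ : Complex.exp ((Complex.arg (γ x₀) : ℝ) * Complex.I) = γ x₀ := by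
      have := Complex.norm_mul_exp_arg_mul_I (γ x₀)
      rwa [hz₀, Complex.ofReal_one, one_mul] at this
    have key : ‖γ (x - x₀) - 1‖ = ‖γ x - γ x₀‖ := by
      rw [AddChar.map_sub_eq_div, div_sub_one hne₀, norm_div, hz₀, div_one]
    rw [key, ← hex, ← hex₀]
    calc ‖Complex.exp ((Complex.arg (γ x) : ℝ) * Complex.I)
          - Complex.exp ((Complex.arg (γ x₀) : ℝ) * Complex.I)‖
        ≤ |Complex.arg (γ x) - Complex.arg (γ x₀)| := chord _ _
      _ ≤ 2 * Real.pi / N := harg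
      _ ≤ ρ := by rw [div_le_iff₀ hNR]; nlinarith
  -- transfer cardinalities
  have himg : (fun x => x - x₀) '' (T : Set G) ⊆ bohr Γ ρ := by
    rintro _ ⟨x, hx, rfl⟩
    exact hmem x hx
  have hinj : Function.Injective (fun x : G => x - x₀) := sub_left_injective
  have h1 : ((fun x => x - x₀) '' (T : Set G)).ncard = T.card := by
    rw [Set.ncard_image_of_injective _ hinj, Set.ncard_coe_finset]
  have h2 : (T.card : ℝ) ≤ (Nat.card (bohr Γ ρ) : ℝ) := by
    rw [Nat.card_coe_set_eq]
    have hle := Set.ncard_le_ncard himg (Set.toFinite _)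
    rw [h1] at hle
    exact_mod_cast hle
  have hmain : (ρ / 8) ^ d * (Fintype.card G : ℝ) ≤ (Fintype.card G : ℝ) / N ^ d := by
    have hstep : ρ / 8 ≤ 1 / N := by
      rw [div_le_div_iff₀ (by norm_num) hNR]; nlinarith
    calc (ρ / 8) ^ d * (Fintype.card G : ℝ)
        ≤ (1 / N : ℝ) ^ d * (Fintype.card G : ℝ) := by
          gcongr
      _ = (Fintype.card G : ℝ) / N ^ d := by
          rw [div_pow, one_pow, div_mul_eq_mul_div, one_mul]
  exact hmain.trans (hy.trans h2)
end

section
/- For any Bohr set B = Bohr(Γ;ρ) in a finite abelian group G, there exists δ ∈ [1/2, 1] such that the dilate B_δ = Bohr(Γ; δρ) is regular, i.e., for all η ∈ (0, 1/(100d)] (where d = |Γ|) one has (1−100ηd)|B_δ| ≤ |B_{δ(1−η)}| ≤ |B_{δ(1+η)}| ≤ (1+100ηd)|B_δ|. -/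
set_option linter.unusedSectionVars false
set_option linter.unusedVariables false
set_option maxHeartbeats 4000000

open Finset Metric Set MeasureTheory

section aux

variable {G : Type*} [AddCommGroup G] [Fintype G]

lemma bohr_mono (Γ : Finset (AddChar G ℂ)) {r s : ℝ} (h : r ≤ s) : bohr Γ r ⊆ bohr Γ s :=
  fun x hx γ hγ => (hx γ hγ).trans h

lemma zero_mem_bohr (Γ : Finset (AddChar G ℂ)) {r : ℝ} (h : 0 ≤ r) : (0:G) ∈ bohr Γ r := by
  intro γ hγ
  simp [AddChar.map_zero_eq_one, h]

lemma bohr_card_pos (Γ : Finset (AddChar G ℂ)) {r : ℝ} (h : 0 ≤ r) :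
    0 < Nat.card (bohr Γ r) := by
  have := zero_mem_bohr (G := G) Γ h
  have hfin : (bohr Γ r).Finite := Set.toFinite _
  exact Nat.card_pos_iff.2 ⟨⟨0, this⟩, Set.Finite.to_subtype hfin⟩

lemma bohr_card_mono (Γ : Finset (AddChar G ℂ)) {r s : ℝ} (h : r ≤ s) :
    Nat.card (bohr Γ r) ≤ Nat.card (bohr Γ s) :=
  Nat.card_mono (Set.toFinite _) (bohr_mono Γ h)

lemma addchar_abs (γ : AddChar G ℂ) (x : G) : ‖γ x‖ = 1 :=
  AddChar.norm_apply γ x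

lemma addchar_sub_abs (γ : AddChar G ℂ) (x y : G) :
    ‖γ (x - y) - 1‖ = ‖γ x - γ y‖ := by
  have h1 : γ (x - y) * γ y = γ x := by
    rw [← AddChar.map_add_eq_mul, sub_add_cancel]
  have h2 : ‖γ y‖ = 1 := addchar_abs γ y
  calc ‖γ (x - y) - 1‖
      = ‖γ (x - y) - 1‖ * ‖γ y‖ := by rw [h2, mul_one]
    _ = ‖(γ (x - y) - 1) * γ y‖ := (norm_mul _ _).symm
    _ = ‖γ x - γ y‖ := by rw [sub_mul, one_mul, h1]

lemma bohr_cover (Γ : Finset (AddChar G ℂ)) {r s : ℝ} (hr : 0 < r) (hrs : r ≤ s) :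
    (Nat.card (bohr Γ s) : ℝ) ≤
      ((2*(s/r)+2) * (4*(s/r)+2))^Γ.card * (Nat.card (bohr Γ r) : ℝ) := by
  classical
  set w : ℝ := r / 2 with hw
  have hw0 : 0 < w := by positivity
  set Bs : Finset G := Finset.univ.filter (· ∈ bohr Γ s) with hBs
  set Br : Finset G := Finset.univ.filter (· ∈ bohr Γ r) with hBr
  set J : Finset ℤ := Finset.Icc ⌊(1-s)/w⌋ ⌊1/w⌋ with hJ
  set K : Finset ℤ := Finset.Icc ⌊(-s)/w⌋ ⌊s/w⌋ with hK
  set t : G → (↥Γ → ℤ × ℤ) :=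
    fun x γ => (⌊(γ.1 x).re / w⌋, ⌊(γ.1 x).im / w⌋) with ht
  have hmem : ∀ x ∈ Bs, ∀ γ : ↥Γ, t x γ ∈ J ×ˢ K := by
    rintro x hx γ
    have hxB : x ∈ bohr Γ s := by simpa [hBs] using hx
    have habs : ‖γ.1 x - 1‖ ≤ s := hxB γ.1 γ.2
    have hre1 : |(γ.1 x).re - 1| ≤ s := by
      have := Complex.abs_re_le_norm (γ.1 x - 1)
      simpa using this.trans habs
    have hre2 : (γ.1 x).re ≤ 1 := by
      have := Complex.re_le_norm (γ.1 x)
      rwa [addchar_abs] at this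
    have him : |(γ.1 x).im| ≤ s := by
      have := Complex.abs_im_le_norm (γ.1 x - 1)
      simpa using this.trans habs
    have h1 : 1 - s ≤ (γ.1 x).re := by
      have := abs_le.1 hre1; linarith [this.1]
    simp only [Finset.mem_product, hJ, hK, Finset.mem_Icc, ht]
    refine ⟨⟨?_, ?_⟩, ?_, ?_⟩
    · exact Int.floor_le_floor (by apply div_le_div_of_nonneg_right h1 hw0.le |>.trans_eq rfl)
    · exact Int.floor_le_floor (div_le_div_of_nonneg_right hre2 hw0.le)
    · exact Int.floor_le_floor (div_le_div_of_nonneg_right (by linarith [abs_le.1 him]) hw0.le)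
    · exact Int.floor_le_floor (div_le_div_of_nonneg_right (abs_le.1 him).2 hw0.le)
  have hfib : ∀ x ∈ Bs, ∀ y ∈ Bs, t x = t y → x - y ∈ bohr Γ r := by
    intro x hx y hy hxy γ hγ
    have h := congrFun hxy ⟨γ, hγ⟩
    have hrefl : (⌊(γ x).re / w⌋ : ℤ) = ⌊(γ y).re / w⌋ := congrArg Prod.fst h
    have himfl : (⌊(γ x).im / w⌋ : ℤ) = ⌊(γ y).im / w⌋ := congrArg Prod.snd h
    have hre : |(γ x).re / w - (γ y).re / w| < 1 := Int.abs_sub_lt_one_of_floor_eq_floor hrefl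
    have him : |(γ x).im / w - (γ y).im / w| < 1 := Int.abs_sub_lt_one_of_floor_eq_floor himfl
    have hre' : |(γ x).re - (γ y).re| < w := by
      rw [div_sub_div_same, abs_div, abs_of_pos hw0, div_lt_one hw0] at hre
      exact hre
    have him' : |(γ x).im - (γ y).im| < w := by
      rw [div_sub_div_same, abs_div, abs_of_pos hw0, div_lt_one hw0] at him
      exact him
    rw [addchar_sub_abs]
    have := Complex.norm_le_abs_re_add_abs_im (γ x - γ y)
    simp only [Complex.sub_re, Complex.sub_im] at this
    calc ‖γ x - γ y‖ ≤ |(γ x).re - (γ y).re| + |(γ x).im - (γ y).im| := this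
      _ ≤ w + w := by linarith
      _ = r := by rw [hw]; ring
  have hcard1 : Bs.card ≤ Br.card * (Bs.image t).card := by
    apply Finset.card_le_mul_card_image
    intro b hb
    obtain ⟨y, hy, hty⟩ := Finset.mem_image.1 hb
    apply Finset.card_le_card_of_injOn (fun x => x - y)
    · intro x hx
      simp only [Finset.mem_coe, Finset.mem_filter, Finset.mem_univ, true_and] at hx ⊢
      have := hfib x hx.1 y hy (hx.2.trans hty.symm)
      simpa [hBr] using this
    · intro a _ b _ hab
      simpa using hab
  have hcard2 : (Bs.image t).card ≤ (J.card * K.card) ^ Γ.card := by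
    calc (Bs.image t).card ≤ (Fintype.piFinset (fun _ : ↥Γ => J ×ˢ K)).card := by
          apply Finset.card_le_card
          intro f hf
          obtain ⟨x, hx, hfx⟩ := Finset.mem_image.1 hf
          rw [Fintype.mem_piFinset]
          intro γ
          rw [← hfx]
          exact hmem x hx γ
      _ = (J.card * K.card) ^ Γ.card := by
          rw [Fintype.card_piFinset]
          simp [Finset.card_product, Finset.prod_const, Fintype.card_coe]
  have hfin : ∀ (ρ:ℝ), Nat.card (bohr Γ ρ) = (Finset.univ.filter (· ∈ bohr Γ ρ)).card := by
    intro ρ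
    rw [Nat.card_eq_fintype_card, ← Set.toFinset_card]
    congr 1
    ext x
    simp
  have hNs : Nat.card (bohr Γ s) = Bs.card := hfin s
  have hNr : Nat.card (bohr Γ r) = Br.card := hfin r
  have hlam : (1:ℝ) ≤ s/r := (one_le_div hr).2 hrs
  have key : ∀ (a b : ℤ) (c : ℝ), 0 ≤ c → (b:ℝ) - (a:ℝ) + 1 ≤ c →
      (((Finset.Icc a b).card : ℝ)) ≤ c := by
    intro a b c hc h
    rw [Int.card_Icc]
    rcases le_or_gt (b + 1 - a) 0 with h0|h0
    · rw [Int.toNat_of_nonpos h0]; simpa using hc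
    · have h' : (((b + 1 - a).toNat : ℤ) : ℝ) = (b:ℝ) + 1 - a := by
        rw [Int.toNat_of_nonneg h0.le]; push_cast; ring
      have h'' : (((b + 1 - a).toNat : ℕ) : ℝ) = (((b + 1 - a).toNat : ℤ) : ℝ) := by
        push_cast; ring
      rw [h'', h']; linarith
  have hws : s/w = 2*(s/r) := by rw [hw]; field_simp
  have hJc : (J.card : ℝ) ≤ 2*(s/r)+2 := by
    rw [hJ]
    apply key _ _ _ (by positivity)
    have f1 : (⌊(1:ℝ)/w⌋ : ℝ) ≤ 1/w := Int.floor_le _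
    have f2 : (1-s)/w - 1 < (⌊(1-s)/w⌋ : ℝ) := Int.sub_one_lt_floor _
    have : 1/w - (1-s)/w = s/w := by field_simp; ring
    nlinarith [hws]
  have hKc : (K.card : ℝ) ≤ 4*(s/r)+2 := by
    rw [hK]
    apply key _ _ _ (by positivity)
    have f1 : (⌊s/w⌋ : ℝ) ≤ s/w := Int.floor_le _
    have f2 : (-s)/w - 1 < (⌊(-s)/w⌋ : ℝ) := Int.sub_one_lt_floor _
    have : s/w - (-s)/w = 2*(s/w) := by ring
    nlinarith [hws]
  calc (Nat.card (bohr Γ s) : ℝ) = (Bs.card : ℝ) := by rw [hNs]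
    _ ≤ ((J.card * K.card : ℕ) : ℝ)^Γ.card * (Br.card:ℝ) := by
        push_cast
        calc (Bs.card:ℝ) ≤ (Br.card:ℝ) * ((Bs.image t).card:ℝ) := by exact_mod_cast hcard1
          _ ≤ (Br.card:ℝ) * ((J.card:ℝ) * (K.card:ℝ))^Γ.card := by
              have := hcard2
              have h2 : ((Bs.image t).card:ℝ) ≤ ((J.card:ℝ) * (K.card:ℝ))^Γ.card := by
                exact_mod_cast this
              nlinarith [Nat.cast_nonneg (α := ℝ) Br.card, h2,
                pow_nonneg (by positivity : (0:ℝ) ≤ (J.card:ℝ)*(K.card:ℝ)) Γ.card]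
          _ = ((J.card:ℝ) * (K.card:ℝ))^Γ.card * (Br.card:ℝ) := by ring
    _ ≤ ((2*(s/r)+2) * (4*(s/r)+2))^Γ.card * (Nat.card (bohr Γ r) : ℝ) := by
        rw [hNr]
        push_cast
        have hbase : (J.card:ℝ) * (K.card:ℝ) ≤ (2*(s/r)+2) * (4*(s/r)+2) := by
          nlinarith [Nat.cast_nonneg (α := ℝ) J.card, Nat.cast_nonneg (α := ℝ) K.card]
        exact mul_le_mul_of_nonneg_right
          (pow_le_pow_left₀ (by positivity) hbase _) (Nat.cast_nonneg _)

end aux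

lemma sum_increments_le (h : ℝ → ℝ) (hm : Monotone h) (A : ℝ) (rad : ℝ → ℝ)
    (v : Finset ℝ) : ∀ B : ℝ, (∀ b ∈ v, 0 < rad b) → (∀ b ∈ v, A ≤ b - rad b) →
    (∀ b ∈ v, b + rad b ≤ B) →
    (Set.PairwiseDisjoint ↑v fun b => Set.Ioc (b - rad b) (b + rad b)) → A ≤ B →
    ∑ b ∈ v, (h (b + rad b) - h (b - rad b)) ≤ h B - h A := by
  induction v using Finset.strongInduction with
  | _ v ih =>
    intro B hpos hA hB hdisj hAB
    rcases v.eq_empty_or_nonempty with rfl | hne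
    · simpa using sub_nonneg.2 (hm hAB)
    · obtain ⟨b0, hb0, hmax⟩ := v.exists_max_image (fun b => b + rad b) hne
      have hkey : ∀ b ∈ v.erase b0, b + rad b ≤ b0 - rad b0 := by
        intro b hb
        by_contra hcon
        push_neg at hcon
        have hbv : b ∈ v := Finset.mem_of_mem_erase hb
        have hbne : b ≠ b0 := Finset.ne_of_mem_erase hb
        have hd := hdisj (by simpa using hbv) (by simpa using hb0) hbne
        have hz : (b + rad b) ∈ Set.Ioc (b - rad b) (b + rad b) :=
          ⟨by linarith [hpos b hbv], le_refl _⟩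
        have hz0 : (b + rad b) ∈ Set.Ioc (b0 - rad b0) (b0 + rad b0) := ⟨hcon, hmax b hbv⟩
        exact Set.disjoint_left.1 hd hz hz0
      have hsub : v.erase b0 ⊂ v := Finset.erase_ssubset hb0
      have hIH := ih (v.erase b0) hsub (b0 - rad b0)
        (fun b hb => hpos b (Finset.mem_of_mem_erase hb))
        (fun b hb => hA b (Finset.mem_of_mem_erase hb))
        hkey
        (hdisj.subset (by simp [Finset.coe_subset, Finset.erase_subset]))
        (hA b0 hb0)
      rw [← Finset.add_sum_erase _ _ hb0]
      have h1 : h (b0 + rad b0) ≤ h B := hm (hB b0 hb0)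
      linarith

lemma exists_good_point (h : ℝ → ℝ) (hm : Monotone h) {a U Kc : ℝ}
    (hU : 0 < U) (hK : 0 < Kc) (ha : 0 < a)
    (hT : 8 * (h U - h (-a - U)) / Kc < a) :
    ∃ s ∈ Set.Icc (-a) (0:ℝ), ∀ u : ℝ, 0 < u → u ≤ U →
      h (s + u) - h (s - u) ≤ Kc * u := by
  by_contra hbad
  push_neg at hbad
  have hch : ∀ s : ℝ, ∃ u : ℝ, 0 < u ∧ u ≤ U ∧
      (s ∈ Set.Icc (-a) (0:ℝ) → Kc * u < h (s + u) - h (s - u)) := by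
    intro s
    by_cases hs : s ∈ Set.Icc (-a) (0:ℝ)
    · obtain ⟨u, hu1, hu2, hu3⟩ := hbad s hs
      exact ⟨u, hu1, hu2, fun _ => hu3⟩
    · exact ⟨U, hU, le_refl _, fun hs' => absurd hs' hs⟩
  set rad : ℝ → ℝ := fun s => Classical.choose (hch s) with hraddef
  have hrad : ∀ s : ℝ, 0 < rad s ∧ rad s ≤ U ∧
      (s ∈ Set.Icc (-a) (0:ℝ) → Kc * rad s < h (s + rad s) - h (s - rad s)) :=
    fun s => Classical.choose_spec (hch s)
  obtain ⟨u, hu_sub, hu_disj, hu_cov⟩ :=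
    Vitali.exists_disjoint_subfamily_covering_enlargement_closedBall
      (Set.Icc (-a) (0:ℝ)) (fun s => s) rad U (fun s _ => (hrad s).2.1) 4 (by norm_num)
  have hu_count : u.Countable := by
    apply hu_disj.countable_of_nonempty_interior
    intro b hb
    rw [interior_closedBall _ (ne_of_gt (hrad b).1)]
    exact nonempty_ball.2 (hrad b).1
  have hcov : Set.Icc (-a) (0:ℝ) ⊆ ⋃ b ∈ u, closedBall b (4 * rad b) := by
    intro s hs
    obtain ⟨b, hb, hsub⟩ := hu_cov s hs
    exact Set.mem_biUnion hb (hsub (mem_closedBall_self (hrad s).1.le))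
  have hmeas : (volume (Set.Icc (-a) (0:ℝ))) ≤
      ∑' b : u, volume (closedBall (b:ℝ) (4 * rad b)) :=
    (measure_mono hcov).trans (measure_biUnion_le volume hu_count _)
  have hvol : volume (Set.Icc (-a) (0:ℝ)) = ENNReal.ofReal a := by
    rw [Real.volume_Icc]; norm_num
  have htsum : ∑' b : u, volume (closedBall (b:ℝ) (4 * rad b)) ≤
      ENNReal.ofReal (8 * (h U - h (-a - U)) / Kc) := by
    have : ∀ b : u, volume (closedBall (b:ℝ) (4 * rad b)) = ENNReal.ofReal (8 * rad b) := by
      intro b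
      rw [Real.volume_closedBall]
      congr 1
      ring
    rw [tsum_congr this]
    rw [ENNReal.tsum_eq_iSup_sum]
    apply iSup_le
    intro v
    set v' : Finset ℝ := v.image Subtype.val with hv'
    have hv'mem : ∀ b ∈ v', b ∈ u := by
      intro b hb
      obtain ⟨c, _, rfl⟩ := Finset.mem_image.1 hb
      exact c.2
    have hsum_eq : ∑ b ∈ v, ENNReal.ofReal (8 * rad b) =
        ∑ b ∈ v', ENNReal.ofReal (8 * rad b) := by
      rw [hv', Finset.sum_image (by intro x _ y _ hxy; exact Subtype.ext hxy)]
    rw [hsum_eq, ← ENNReal.ofReal_sum_of_nonneg (fun b _ => by linarith [(hrad b).1])]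
    apply ENNReal.ofReal_le_ofReal
    have hIcc : ∀ b ∈ v', b ∈ Set.Icc (-a) (0:ℝ) := fun b hb => hu_sub (hv'mem b hb)
    have hsum := sum_increments_le h hm (-a - U) rad v' U
      (fun b _ => (hrad b).1)
      (fun b hb => by
        have := (hIcc b hb).1
        have := (hrad b).2.1
        linarith)
      (fun b hb => by
        have := (hIcc b hb).2
        have := (hrad b).2.1
        linarith)
      (by
        apply Set.PairwiseDisjoint.mono (hu_disj.subset ?_)
        · intro b
          show Set.Ioc (b - rad b) (b + rad b) ⊆ closedBall b (rad b)
          rw [Real.closedBall_eq_Icc]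
          exact Set.Ioc_subset_Icc_self
        · intro b hb
          exact hv'mem b hb)
      (by linarith)
    have hKsum : Kc * (∑ b ∈ v', rad b) ≤ h U - h (-a - U) := by
      rw [Finset.mul_sum]
      refine le_trans (Finset.sum_le_sum ?_) hsum
      intro b hb
      exact ((hrad b).2.2 (hIcc b hb)).le
    have h8 : ∑ b ∈ v', 8 * rad b = 8 * ∑ b ∈ v', rad b := by
      rw [Finset.mul_sum]
    rw [h8]
    have hdivs : (∑ b ∈ v', rad b) ≤ (h U - h (-a - U)) / Kc := (le_div_iff₀' hK).2 hKsum
    calc 8 * ∑ b ∈ v', rad b ≤ 8 * ((h U - h (-a - U)) / Kc) := by linarith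
      _ = 8 * (h U - h (-a - U)) / Kc := by ring
  have hfinal : ENNReal.ofReal a ≤ ENNReal.ofReal (8 * (h U - h (-a - U)) / Kc) :=
    hvol ▸ (hmeas.trans htsum)
  have hlt : ENNReal.ofReal (8 * (h U - h (-a - U)) / Kc) < ENNReal.ofReal a :=
    (ENNReal.ofReal_lt_ofReal_iff ha).2 hT
  exact absurd hfinal (not_le.2 hlt)

lemma exp_le_one_div_one_sub {x : ℝ} (hx : 0 ≤ x) (hx1 : x < 1) :
    Real.exp x ≤ 1 / (1 - x) := by
  have h1 : 1 - x ≤ Real.exp (-x) := by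
    have := Real.add_one_le_exp (-x); linarith
  rw [Real.exp_neg] at h1
  rw [le_div_iff₀ (by linarith)]
  have h2 := mul_le_mul_of_nonneg_right h1 (Real.exp_pos x).le
  rw [inv_mul_cancel₀ (Real.exp_pos x).ne'] at h2
  nlinarith [Real.exp_pos x]

lemma log_one_add_ge {x : ℝ} (hx : 0 ≤ x) (hx1 : x ≤ 1) :
    x * Real.log 2 ≤ Real.log (1 + x) := by
  have hconv := convexOn_exp.2 (Set.mem_univ (0:ℝ)) (Set.mem_univ (Real.log 2))
    (by linarith : (0:ℝ) ≤ 1 - x) (by linarith : (0:ℝ) ≤ x) (by ring)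
  simp only [smul_eq_mul, mul_zero, zero_add, Real.exp_zero,
    Real.exp_log (by norm_num : (0:ℝ) < 2)] at hconv
  have h2 : Real.exp (x * Real.log 2) ≤ 1 + x := by
    calc Real.exp (x * Real.log 2) ≤ (1 - x) * 1 + x * 2 := hconv
      _ = 1 + x := by ring
  calc x * Real.log 2 = Real.log (Real.exp (x * Real.log 2)) := (Real.log_exp _).symm
    _ ≤ Real.log (1 + x) := Real.log_le_log (Real.exp_pos _) h2

/-- Regular dilates exist: for any Bohr set `Bohr(Γ;ρ)` there is `δ ∈ [1/2,1]` such that the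
dilate `Bohr(Γ;δρ)` is regular. -/
theorem exists_regular_dilate {G : Type*} [AddCommGroup G] [Fintype G]
    (Γ : Finset (AddChar G ℂ)) (hΓ : Γ.Nonempty) (ρ : ℝ) (hρ : 0 ≤ ρ) :
    ∃ δ : ℝ, δ ∈ Set.Icc (1 / 2 : ℝ) 1 ∧
      ∀ η : ℝ, 0 < η → η ≤ 1 / (100 * Γ.card) →
        (1 - 100 * η * Γ.card) * (Nat.card (bohr Γ (δ * ρ)) : ℝ)
            ≤ (Nat.card (bohr Γ (δ * (1 - η) * ρ)) : ℝ) ∧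
          (Nat.card (bohr Γ (δ * (1 - η) * ρ)) : ℝ)
            ≤ (Nat.card (bohr Γ (δ * (1 + η) * ρ)) : ℝ) ∧
          (Nat.card (bohr Γ (δ * (1 + η) * ρ)) : ℝ)
            ≤ (1 + 100 * η * Γ.card) * (Nat.card (bohr Γ (δ * ρ)) : ℝ) := by
  classical
  have hd : (1:ℝ) ≤ (Γ.card : ℝ) := by
    exact_mod_cast Nat.one_le_iff_ne_zero.2 (Finset.card_ne_zero_of_mem hΓ.choose_spec)
  have hd0 : (0:ℝ) < (Γ.card : ℝ) := by linarith
  rcases eq_or_lt_of_le hρ with hρ0 | hρpos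
  · -- degenerate case ρ = 0
    refine ⟨1, ⟨by norm_num, le_refl 1⟩, ?_⟩
    intro η hη1 hη2
    have hx0 : 0 ≤ 100 * η * (Γ.card:ℝ) := by positivity
    have hzero : ∀ c : ℝ, c * ρ = 0 := by intro c; rw [← hρ0, mul_zero]
    rw [hzero, hzero, hzero]
    have hN : (0:ℝ) ≤ (Nat.card (bohr Γ (0:ℝ)) : ℝ) := Nat.cast_nonneg _
    refine ⟨by nlinarith, le_refl _, by nlinarith⟩
  · -- main case ρ > 0
    set d : ℝ := (Γ.card : ℝ) with hdd
    have hU : (0:ℝ) < 1/(99*d) := by positivity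
    have hKc : (0:ℝ) < 68*d := by positivity
    have ha : (0:ℝ) < Real.log 2 := Real.log_pos (by norm_num)
    set h : ℝ → ℝ := fun t => Real.log (Nat.card (bohr Γ (Real.exp t * ρ))) with hh
    have hN1 : ∀ t : ℝ, (1:ℝ) ≤ (Nat.card (bohr Γ (Real.exp t * ρ)) : ℝ) := by
      intro t
      have : 0 < Nat.card (bohr Γ (Real.exp t * ρ)) :=
        bohr_card_pos Γ (by positivity)
      exact_mod_cast this
    have hmono : Monotone h := by
      intro t t' htt
      have hcard := bohr_card_mono (G := G) Γ
        (mul_le_mul_of_nonneg_right (Real.exp_le_exp.2 htt) hρ)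
      exact Real.log_le_log (by linarith [hN1 t]) (by exact_mod_cast hcard)
    -- total increase bound
    have hT : 8 * (h (1/(99*d)) - h (-(Real.log 2) - 1/(99*d))) / (68*d) < Real.log 2 := by
      set U : ℝ := 1/(99*d) with hUU
      have hU99 : U ≤ 1/99 := by
        rw [hUU]
        rw [div_le_div_iff₀ (by positivity) (by norm_num)]
        nlinarith
      set rR : ℝ := Real.exp (-(Real.log 2) - U) * ρ with hrR
      set rS : ℝ := Real.exp U * ρ with hrS
      have hrR0 : 0 < rR := by positivity
      have hrs : rR ≤ rS := by
        apply mul_le_mul_of_nonneg_right _ hρ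
        apply Real.exp_le_exp.2
        linarith [hU.le]
      have hratio : rS / rR = Real.exp (Real.log 2 + 2*U) := by
        rw [hrS, hrR, mul_div_mul_right _ _ (ne_of_gt hρpos), ← Real.exp_sub]
        congr 1
        ring
      have hlam2 : rS / rR ≤ 2.05 := by
        rw [hratio, Real.exp_add, Real.exp_log (by norm_num : (0:ℝ) < 2)]
        have h2U : Real.exp (2*U) ≤ Real.exp (2/99) := Real.exp_le_exp.2 (by linarith)
        have : Real.exp (2/99) ≤ 1/(1 - 2/99) := exp_le_one_div_one_sub (by norm_num) (by norm_num)
        have h99 : (1:ℝ)/(1 - 2/99) = 99/97 := by norm_num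
        nlinarith
      have hlam1 : (1:ℝ) ≤ rS / rR := (one_le_div hrR0).2 hrs
      have hcover := bohr_cover Γ hrR0 hrs
      have hbase : ((2*(rS/rR)+2) * (4*(rS/rR)+2)) ≤ 64 := by nlinarith
      have hcover64 : (Nat.card (bohr Γ rS) : ℝ) ≤ 64^Γ.card * (Nat.card (bohr Γ rR) : ℝ) := by
        refine hcover.trans ?_
        apply mul_le_mul_of_nonneg_right _ (Nat.cast_nonneg _)
        exact pow_le_pow_left₀ (by nlinarith) hbase _
      have hNS1 : (1:ℝ) ≤ (Nat.card (bohr Γ rS) : ℝ) := hN1 U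
      have hNR1 : (1:ℝ) ≤ (Nat.card (bohr Γ rR) : ℝ) := hN1 (-(Real.log 2) - U)
      have hdiff : h U - h (-(Real.log 2) - U) ≤ (Γ.card : ℝ) * Real.log 64 := by
        have h1 : h U = Real.log (Nat.card (bohr Γ rS)) := by rw [hh]
        have h2 : h (-(Real.log 2) - U) = Real.log (Nat.card (bohr Γ rR)) := by rw [hh]
        rw [h1, h2]
        have h3 : Real.log (Nat.card (bohr Γ rS) : ℝ) ≤
            Real.log (64^Γ.card * (Nat.card (bohr Γ rR) : ℝ)) :=
          Real.log_le_log (by linarith) hcover64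
        rw [Real.log_mul (by positivity) (by linarith), Real.log_pow] at h3
        linarith
      have hlog64 : Real.log 64 = 6 * Real.log 2 := by
        rw [show (64:ℝ) = 2^6 by norm_num, Real.log_pow]
        norm_num
      rw [div_lt_iff₀ hKc]
      rw [hlog64] at hdiff
      nlinarith [ha, hd]
    obtain ⟨s, hs, hgood⟩ := exists_good_point h hmono hU hKc ha hT
    refine ⟨Real.exp s, ⟨?_, ?_⟩, ?_⟩
    · have : Real.exp (-(Real.log 2)) ≤ Real.exp s := Real.exp_le_exp.2 hs.1
      rw [Real.exp_neg, Real.exp_log (by norm_num : (0:ℝ) < 2)] at this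
      linarith [this]
    · calc Real.exp s ≤ Real.exp 0 := Real.exp_le_exp.2 hs.2
        _ = 1 := Real.exp_zero
    · intro η hη1 hη2
      set δ : ℝ := Real.exp s with hδ
      have hδ0 : 0 < δ := Real.exp_pos s
      have hη100 : η ≤ 1/100 := by
        refine hη2.trans ?_
        rw [div_le_div_iff₀ (by positivity) (by norm_num)]
        nlinarith
      have h1η : 0 < 1 - η := by linarith
      have hx1 : 100 * η * d ≤ 1 := by
        rw [le_div_iff₀ (by positivity)] at hη2
        nlinarith
      have hx0 : 0 ≤ 100 * η * d := by positivity
      set u : ℝ := -Real.log (1 - η) with hu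
      have hu_pos : 0 < u := by
        rw [hu, neg_pos]
        exact Real.log_neg h1η (by linarith)
      have hu_le : u ≤ (100/99) * η := by
        have h1 : u = Real.log ((1-η)⁻¹) := by rw [Real.log_inv]
        have h2 : Real.log ((1-η)⁻¹) ≤ (1-η)⁻¹ - 1 :=
          Real.log_le_sub_one_of_pos (by positivity)
        have h3 : (1-η)⁻¹ ≤ 100/99 := by
          rw [inv_le_comm₀ h1η (by norm_num)]
          linarith
        have h4 : (1-η)⁻¹ - 1 ≤ (100/99)*η := by
          have h5 : (1-η)⁻¹ - 1 = η * (1-η)⁻¹ := by field_simp; ring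
          rw [h5]
          nlinarith
        linarith
      have hu_U : u ≤ 1/(99*d) := by
        have : (100/99)*η ≤ (100/99) * (1/(100*d)) := by
          apply mul_le_mul_of_nonneg_left hη2 (by norm_num)
        have heq : (100/99) * (1/(100*d)) = 1/(99*d) := by
          field_simp
        linarith [hu_le, heq ▸ this]
      have hgoodu := hgood u hu_pos hu_U
      -- exponential identities
      have hexpu : Real.exp u = (1-η)⁻¹ := by
        rw [hu, Real.exp_neg, Real.exp_log h1η]
      have hexp_su : Real.exp (s - u) = δ * (1 - η) := by
        rw [Real.exp_sub, hexpu, div_inv_eq_mul]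
      have hexp_pu : Real.exp (s + u) = δ * (1-η)⁻¹ := by
        rw [Real.exp_add, hexpu]
      have hNp1 : (1:ℝ) ≤ (Nat.card (bohr Γ (δ * (1+η) * ρ)) : ℝ) := by
        have : 0 < Nat.card (bohr Γ (δ * (1+η) * ρ)) := bohr_card_pos Γ (by positivity)
        exact_mod_cast this
      have hNm1 : (1:ℝ) ≤ (Nat.card (bohr Γ (δ * (1-η) * ρ)) : ℝ) := by
        have : 0 < Nat.card (bohr Γ (δ * (1-η) * ρ)) := bohr_card_pos Γ (by positivity)
        exact_mod_cast this
      have hN01 : (1:ℝ) ≤ (Nat.card (bohr Γ (δ * ρ)) : ℝ) := by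
        have : 0 < Nat.card (bohr Γ (δ * ρ)) := bohr_card_pos Γ (by positivity)
        exact_mod_cast this
      have hmono_rad : ∀ {r1 r2 : ℝ}, r1 ≤ r2 →
          (Nat.card (bohr Γ r1):ℝ) ≤ (Nat.card (bohr Γ r2):ℝ) := by
        intro r1 r2 h12
        exact_mod_cast bohr_card_mono Γ h12
      have h1plus : (1+η) ≤ (1-η)⁻¹ := by
        have hmm : (1+η)*(1-η) ≤ 1 := by nlinarith
        have := mul_le_mul_of_nonneg_right hmm (inv_nonneg.2 h1η.le)
        rwa [mul_assoc, mul_inv_cancel₀ h1η.ne', mul_one, one_mul] at this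
      have hrad1 : δ*(1+η)*ρ ≤ Real.exp (s+u) * ρ := by
        rw [hexp_pu]
        apply mul_le_mul_of_nonneg_right _ hρ
        nlinarith [hδ0, h1plus]
      have hstep1 : Real.log (Nat.card (bohr Γ (δ*(1+η)*ρ)):ℝ) ≤ h (s+u) := by
        simp only [hh]
        exact Real.log_le_log (by linarith) (hmono_rad hrad1)
      have hstep2 : h (s-u) = Real.log (Nat.card (bohr Γ (δ*(1-η)*ρ)):ℝ) := by
        simp only [hh]
        rw [hexp_su]
      have hKu : 68*d*u ≤ Real.log (1 + 100*η*d) := by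
        have hlow := log_one_add_ge hx0 hx1
        have hub : 68*d*u ≤ 68*d*((100/99)*η) := by nlinarith [hd0]
        have hl2 : (0.6931471803:ℝ) < Real.log 2 := Real.log_two_gt_d9
        nlinarith [hη1.le, hd0, hd]
      have hx1' : (0:ℝ) < 1 + 100*η*d := by nlinarith
      have hmain : (Nat.card (bohr Γ (δ*(1+η)*ρ)):ℝ) ≤
          (1 + 100*η*d) * (Nat.card (bohr Γ (δ*(1-η)*ρ)):ℝ) := by
        have hlog : Real.log (Nat.card (bohr Γ (δ*(1+η)*ρ)):ℝ) ≤
            Real.log (Nat.card (bohr Γ (δ*(1-η)*ρ)):ℝ) + Real.log (1 + 100*η*d) := by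
          have := hgoodu
          rw [hstep2] at this
          linarith [hstep1, hKu]
        have hexp := Real.exp_le_exp.2 hlog
        rw [Real.exp_log (by linarith : (0:ℝ) < (Nat.card (bohr Γ (δ*(1+η)*ρ)):ℝ)),
          Real.exp_add,
          Real.exp_log (by linarith : (0:ℝ) < (Nat.card (bohr Γ (δ*(1-η)*ρ)):ℝ)),
          Real.exp_log hx1'] at hexp
        linarith [hexp]
      have hmono1 : (Nat.card (bohr Γ (δ*ρ)):ℝ) ≤ (Nat.card (bohr Γ (δ*(1+η)*ρ)):ℝ) :=
        hmono_rad (by nlinarith [mul_pos (mul_pos hδ0 hη1) hρpos])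
      have hmono2 : (Nat.card (bohr Γ (δ*(1-η)*ρ)):ℝ) ≤ (Nat.card (bohr Γ (δ*ρ)):ℝ) :=
        hmono_rad (by nlinarith [mul_pos (mul_pos hδ0 hη1) hρpos])
      have hmono3 : (Nat.card (bohr Γ (δ*(1-η)*ρ)):ℝ) ≤ (Nat.card (bohr Γ (δ*(1+η)*ρ)):ℝ) :=
        hmono_rad (by nlinarith [mul_pos (mul_pos hδ0 hη1) hρpos])
      refine ⟨?_, hmono3, ?_⟩
      · nlinarith [hmain, hmono1, hNm1]
      · nlinarith [hmain, hmono2]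
end
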